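/- arXiv:1811.09879 — 4 statements merged into one kernel-verified Lean document; each statement's English description precedes it below -/
import Mathlib

section
/- Let I ⊆ (0,∞) be an interval with inf I = 0 and let n ∈ ℕ. Suppose M : Iⁿ → ℝ satisfies min(x₁,…,xₙ) ≤ M(x) ≤ max(x₁,…,xₙ) for all x ∈ Iⁿ and is Jensen concave, i.e. M((x+y)/2) ≥ (M(x)+M(y))/2 for all x, y ∈ Iⁿ. Then for every x ∈ (0,∞)ⁿ the liminf and the limsup of M(tx)/t as t → 0⁺ (over those t > 0 with tx ∈ Iⁿ) coincide; moreover, denoting the common value by M_#(x), the function M_# : (0,∞)ⁿ → ℝ is Jensen concave, and M(x) ≤ M_#(x) for all x ∈ Iⁿ. -/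
open Set Filter Topology

/-- The filter `t → 0⁺` restricted to those `t` with `t • x ∈ Iⁿ`. -/
def homFilter (I : Set ℝ) {n : ℕ} (x : Fin n → ℝ) : Filter ℝ :=
  (𝓝[>] (0:ℝ)) ⊓ Filter.principal {t : ℝ | ∀ i, t * x i ∈ I}

lemma dyadic_concave (P : Set ℝ) (hP : P.OrdConnected) (g : ℝ → ℝ)
    (hg : ∀ a ∈ P, ∀ b ∈ P, (g a + g b) / 2 ≤ g ((a + b) / 2)) :
    ∀ m k : ℕ, k ≤ 2 ^ m → ∀ a ∈ P, ∀ b ∈ P, a ≤ b →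
      ((k : ℝ) * g b + ((2 ^ m : ℝ) - k) * g a) / 2 ^ m
        ≤ g (((k : ℝ) * b + ((2 ^ m : ℝ) - k) * a) / 2 ^ m) := by
  intro m
  induction m with
  | zero =>
    intro k hk a ha b hb hab
    interval_cases k <;> norm_num
  | succ m ih =>
    intro k hk a ha b hb hab
    have h2m : (0:ℝ) < 2 ^ m := by positivity
    have hpow : 2 ^ (m+1) = 2 * 2 ^ m := by ring
    set k₁ := (k+1)/2 with hk₁
    set k₂ := k/2 with hk₂
    have hks : k₁ + k₂ = k := by omega
    have hk1 : k₁ ≤ 2 ^ m := by omega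
    have hk2 : k₂ ≤ 2 ^ m := by omega
    have hmem : ∀ j : ℕ, j ≤ 2 ^ m → ((j:ℝ) * b + ((2^m:ℝ) - j) * a) / 2 ^ m ∈ P := by
      intro j hj
      have hj' : (j:ℝ) ≤ 2 ^ m := by exact_mod_cast hj
      have hj0 : (0:ℝ) ≤ (j:ℝ) := by positivity
      apply hP.out ha hb
      constructor
      · rw [le_div_iff₀ h2m]; nlinarith
      · rw [div_le_iff₀ h2m]; nlinarith
    have h1 := ih k₁ hk1 a ha b hb hab
    have h2 := ih k₂ hk2 a ha b hb hab
    have hmid := hg _ (hmem k₂ hk2) _ (hmem k₁ hk1)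
    have hcast : (k₁:ℝ) + (k₂:ℝ) = (k:ℝ) := by exact_mod_cast congrArg (Nat.cast : ℕ → ℝ) hks
    have hpt : ((((k₂:ℝ) * b + ((2^m:ℝ) - k₂) * a) / 2 ^ m) + (((k₁:ℝ) * b + ((2^m:ℝ) - k₁) * a) / 2 ^ m)) / 2
        = ((k : ℝ) * b + ((2 ^ (m+1) : ℝ) - k) * a) / 2 ^ (m+1) := by
      rw [pow_succ, ← hcast]; field_simp; ring
    rw [hpt] at hmid
    have heq : ((k : ℝ) * g b + ((2 ^ (m+1) : ℝ) - k) * g a) / 2 ^ (m+1)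
        = ((((k₂:ℝ) * g b + ((2^m:ℝ) - k₂) * g a) / 2 ^ m) + (((k₁:ℝ) * g b + ((2^m:ℝ) - k₁) * g a) / 2 ^ m)) / 2 := by
      rw [pow_succ, ← hcast]; field_simp; ring
    rw [heq]
    refine le_trans ?_ hmid
    linarith

lemma exists_dyadic_btwn' {q r : ℝ} (hq : 0 ≤ q) (hqr : q < r) :
    ∃ (m k : ℕ), 0 < k ∧ q < (k:ℝ)/2^m ∧ (k:ℝ)/2^m < r := by
  obtain ⟨m, hm⟩ := exists_pow_lt_of_lt_one (sub_pos.2 hqr) (by norm_num : (1:ℝ)/2 < 1)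
  have h2m : (0:ℝ) < 2 ^ m := by positivity
  refine ⟨m, ⌊q * 2 ^ m⌋₊ + 1, Nat.succ_pos _, ?_, ?_⟩
  · rw [lt_div_iff₀ h2m]
    push_cast
    exact Nat.lt_floor_add_one _
  · rw [div_lt_iff₀ h2m]
    have h1 : (⌊q * 2 ^ m⌋₊ : ℝ) ≤ q * 2 ^ m := Nat.floor_le (by positivity)
    have h2 : ((1:ℝ)/2) ^ m = 1 / 2 ^ m := by rw [div_pow]; norm_num
    rw [h2] at hm
    have : (1:ℝ) < (r - q) * 2 ^ m := by
      rw [div_lt_iff₀ h2m] at hm; linarith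
    push_cast
    nlinarith

lemma ratio_mono (P : Set ℝ) (hP : P.OrdConnected) (g : ℝ → ℝ)
    (hg : ∀ a ∈ P, ∀ b ∈ P, (g a + g b) / 2 ≤ g ((a + b) / 2))
    (hgpos : ∀ t ∈ P, 0 < g t)
    (hdown : ∀ ⦃s t : ℝ⦄, 0 < s → s ≤ t → t ∈ P → s ∈ P)
    {s t : ℝ} (hs : 0 < s) (hst : s ≤ t) (ht : t ∈ P) :
    g t / t ≤ g s / s := by
  have hsP : s ∈ P := hdown hs hst ht
  rcases eq_or_lt_of_le hst with rfl | hlt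
  · exact le_refl _
  have ht0 : 0 < t := lt_trans hs hlt
  have hgt := hgpos t ht
  have hgs := hgpos s hsP
  rw [div_le_div_iff₀ ht0 hs]
  by_contra h
  push_neg at h  -- g s * t < g t * s
  have hq : g s / g t < s / t := by
    rw [div_lt_div_iff₀ hgt ht0]; linarith
  obtain ⟨m, k, hk0, hq1, hq2⟩ := exists_dyadic_btwn' (le_of_lt (div_pos hgs hgt)) hq
  have h2m : (0:ℝ) < 2 ^ m := by positivity
  set lam : ℝ := (k:ℝ)/2^m with hlam
  have hlam0 : 0 < lam := lt_of_le_of_lt (div_nonneg (le_of_lt hgs) (le_of_lt hgt)) hq1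
  have hlam1 : lam < 1 := lt_of_lt_of_le hq2 (by rw [div_le_one ht0]; exact hst)
  have hlt' : lam * t < s := by
    rw [hlam]
    have := hq2
    rw [div_lt_div_iff₀ h2m ht0] at this
    rw [div_mul_eq_mul_div, div_lt_iff₀ h2m]
    linarith
  have hkle : k ≤ 2 ^ m := by
    have : (k:ℝ) < 2 ^ m := by
      have := hlam1; rw [hlam, div_lt_one h2m] at this; exact this
    exact_mod_cast le_of_lt this
  set ε : ℝ := (s - lam * t) / (1 - lam) with hε
  have h1lam : 0 < 1 - lam := by linarith
  have hε0 : 0 < ε := div_pos (by linarith) h1lam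
  have hεs : ε < s := by
    rw [hε, div_lt_iff₀ h1lam]
    nlinarith
  have hεP : ε ∈ P := hdown hε0 (le_of_lt (lt_of_lt_of_le hεs hst)) ht
  have hεle : ε ≤ t := le_of_lt (lt_of_lt_of_le hεs hst)
  have hdy := dyadic_concave P hP g hg m k hkle ε hεP t ht hεle
  have h1ne : (1:ℝ) - lam ≠ 0 := ne_of_gt h1lam
  have h2ne : (2:ℝ)^m ≠ 0 := ne_of_gt h2m
  have hpteq : ((k : ℝ) * t + ((2 ^ m : ℝ) - k) * ε) / 2 ^ m = s := by
    rw [hε]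
    have hlam' : (k:ℝ) = lam * 2 ^ m := by rw [hlam]; field_simp
    rw [hlam']
    field_simp
    ring
  rw [hpteq] at hdy
  -- hdy : (k * g t + (2^m - k) * g ε) / 2^m ≤ g s
  have hgε := hgpos ε hεP
  have hkgt : g s * 2 ^ m < (k:ℝ) * g t := by
    rw [div_lt_div_iff₀ hgt h2m] at hq1
    linarith
  have hknn : (0:ℝ) ≤ (2^m:ℝ) - k := by
    have : (k:ℝ) ≤ 2^m := by exact_mod_cast hkle
    linarith
  have hterm : 0 ≤ ((2^m:ℝ) - k) * g ε := mul_nonneg hknn (le_of_lt hgε)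
  rw [div_le_iff₀ h2m] at hdy
  nlinarith


/-- Theorem 1: for a Jensen-concave mean `M` on `Iⁿ` (where `inf I = 0`, `I ⊆ (0,∞)` an
interval), the lower and upper homogenizations coincide, the resulting function is Jensen
concave on `(0,∞)ⁿ`, and it dominates `M` on `Iⁿ`. -/
theorem statement0 (I : Set ℝ) (hI : I.OrdConnected) (hIpos : I ⊆ Set.Ioi 0)
    (hglb : IsGLB I 0) (n : ℕ) (hn : 0 < n) (M : (Fin n → ℝ) → ℝ)
    (hlow : ∀ x : Fin n → ℝ, (∀ i, x i ∈ I) → ∃ i, x i ≤ M x)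
    (hhigh : ∀ x : Fin n → ℝ, (∀ i, x i ∈ I) → ∃ i, M x ≤ x i)
    (hconc : ∀ x y : Fin n → ℝ, (∀ i, x i ∈ I) → (∀ i, y i ∈ I) →
      (M x + M y) / 2 ≤ M (fun i => (x i + y i) / 2)) :
    (∀ x : Fin n → ℝ, (∀ i, 0 < x i) →
      Filter.limsup (fun t : ℝ => M (fun i => t * x i) / t) (homFilter I x)
        = Filter.liminf (fun t : ℝ => M (fun i => t * x i) / t) (homFilter I x)) ∧
    (∀ x y : Fin n → ℝ, (∀ i, 0 < x i) → (∀ i, 0 < y i) →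
      (Filter.liminf (fun t : ℝ => M (fun i => t * x i) / t) (homFilter I x)
          + Filter.liminf (fun t : ℝ => M (fun i => t * y i) / t) (homFilter I y)) / 2
        ≤ Filter.liminf (fun t : ℝ => M (fun i => t * ((x i + y i) / 2)) / t)
            (homFilter I (fun i => (x i + y i) / 2))) ∧
    (∀ x : Fin n → ℝ, (∀ i, x i ∈ I) →
      M x ≤ Filter.liminf (fun t : ℝ => M (fun i => t * x i) / t) (homFilter I x)) := by
  classical
  have i0 : Fin n := ⟨0, hn⟩
  obtain ⟨b, hbI⟩ := hglb.nonempty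
  have hb0 : 0 < b := hIpos hbI
  -- I is "downward closed" within (0, ∞) up to any of its elements
  have hmemI : ∀ u v : ℝ, 0 < u → u ≤ v → v ∈ I → u ∈ I := by
    intro u v hu huv hv
    have hd : ∃ d ∈ I, d < u := by
      by_contra hcon
      push_neg at hcon
      have hlb : u ∈ lowerBounds I := fun d hd => hcon d hd
      have := hglb.2 hlb
      linarith
    obtain ⟨d, hdI, hdu⟩ := hd
    exact hI.out hdI hv ⟨le_of_lt hdu, huv⟩
  have hJpos : ∀ (x : Fin n → ℝ), (∀ i, 0 < x i) → ∀ t : ℝ, (∀ i, t * x i ∈ I) → 0 < t := by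
    intro x hx t ht
    have h1 : 0 < t * x i0 := hIpos (ht i0)
    rcases mul_pos_iff.1 h1 with ⟨h, _⟩ | ⟨_, h⟩
    · exact h
    · exact absurd (hx i0) (not_lt.2 (le_of_lt h))
  have hJdown : ∀ (x : Fin n → ℝ), (∀ i, 0 < x i) → ∀ s t : ℝ, 0 < s → s ≤ t →
      (∀ i, t * x i ∈ I) → (∀ i, s * x i ∈ I) := by
    intro x hx s t hs hst ht i
    exact hmemI _ _ (mul_pos hs (hx i))
      (mul_le_mul_of_nonneg_right hst (le_of_lt (hx i))) (ht i)
  have hJmem : ∀ (x : Fin n → ℝ), (∀ i, 0 < x i) →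
      ∀ᶠ t in 𝓝[>] (0:ℝ), ∀ i, t * x i ∈ I := by
    intro x hx
    obtain ⟨C, hC⟩ := Finite.exists_le x
    have hC0 : 0 < C + 1 := by have := hx i0; have := hC i0; linarith
    have hsub : ∀ t ∈ Ioo (0:ℝ) (b / (C+1)), ∀ i, t * x i ∈ I := by
      intro t ht i
      refine hmemI _ b (mul_pos ht.1 (hx i)) ?_ hbI
      have h1 : t * x i ≤ t * C := mul_le_mul_of_nonneg_left (hC i) (le_of_lt ht.1)
      have h2 : t * (C + 1) < b := by
        have := ht.2
        rwa [lt_div_iff₀ hC0] at this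
      nlinarith [ht.1]
    exact Filter.eventually_of_mem
      (Ioo_mem_nhdsGT_of_mem ⟨le_refl 0, div_pos hb0 hC0⟩) hsub
  have hfil : ∀ (x : Fin n → ℝ), (∀ i, 0 < x i) → homFilter I x = 𝓝[>] (0:ℝ) := by
    intro x hx
    rw [homFilter, inf_eq_left, le_principal_iff]
    exact hJmem x hx
  have hJoc : ∀ (x : Fin n → ℝ), (∀ i, 0 < x i) →
      OrdConnected {t : ℝ | ∀ i, t * x i ∈ I} := by
    intro x hx
    constructor
    intro t1 h1 t2 h2 u hu i
    exact hI.out (h1 i) (h2 i)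
      ⟨mul_le_mul_of_nonneg_right hu.1 (le_of_lt (hx i)),
       mul_le_mul_of_nonneg_right hu.2 (le_of_lt (hx i))⟩
  have hgpos : ∀ (x : Fin n → ℝ), ∀ t : ℝ, (∀ i, t * x i ∈ I) →
      0 < M (fun i => t * x i) := by
    intro x t ht
    obtain ⟨i, hi⟩ := hlow _ ht
    exact lt_of_lt_of_le (hIpos (ht i)) hi
  have hmono : ∀ (x : Fin n → ℝ), (∀ i, 0 < x i) → ∀ s t : ℝ, 0 < s → s ≤ t →
      (∀ i, t * x i ∈ I) → M (fun i => t * x i) / t ≤ M (fun i => s * x i) / s := by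
    intro x hx s t hs hst ht
    refine ratio_mono {u : ℝ | ∀ i, u * x i ∈ I} (hJoc x hx)
      (fun u => M (fun i => u * x i)) ?_ (fun u hu => hgpos x u hu)
      (fun s t hs hst ht => hJdown x hx s t hs hst ht) hs hst ht
    intro a ha c hc
    have hc' := hconc (fun i => a * x i) (fun i => c * x i) ha hc
    have heq : (fun i => ((fun i => a * x i) i + (fun i => c * x i) i) / 2)
        = (fun i => ((a + c) / 2) * x i) := funext fun i => by ring
    rwa [heq] at hc'
  have hposEv : ∀ᶠ t in 𝓝[>] (0:ℝ), 0 < t := eventually_mem_nhdsWithin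
  have hbddAb : ∀ (x : Fin n → ℝ), (∀ i, 0 < x i) →
      Filter.IsBoundedUnder (· ≤ ·) (𝓝[>] (0:ℝ)) (fun t => M (fun i => t * x i) / t) := by
    intro x hx
    obtain ⟨C, hC⟩ := Finite.exists_le x
    refine ⟨C, Filter.eventually_map.2 ?_⟩
    filter_upwards [hJmem x hx, hposEv] with t ht ht0
    obtain ⟨i, hi⟩ := hhigh _ ht
    rw [div_le_iff₀ ht0]
    calc M (fun i => t * x i) ≤ t * x i := hi
      _ ≤ C * t := by rw [mul_comm]; exact mul_le_mul_of_nonneg_right (hC i) (le_of_lt ht0)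
  have hbddBe : ∀ (x : Fin n → ℝ), (∀ i, 0 < x i) →
      Filter.IsBoundedUnder (· ≥ ·) (𝓝[>] (0:ℝ)) (fun t => M (fun i => t * x i) / t) := by
    intro x hx
    refine ⟨0, Filter.eventually_map.2 ?_⟩
    filter_upwards [hJmem x hx, hposEv] with t ht ht0
    exact le_of_lt (div_pos (hgpos x t ht) ht0)
  have hle_liminf : ∀ (x : Fin n → ℝ), (∀ i, 0 < x i) → ∀ t : ℝ, (∀ i, t * x i ∈ I) →
      M (fun i => t * x i) / t
        ≤ Filter.liminf (fun t : ℝ => M (fun i => t * x i) / t) (𝓝[>] (0:ℝ)) := by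
    intro x hx t ht
    have ht0 : 0 < t := hJpos x hx t ht
    refine Filter.le_liminf_of_le ((hbddAb x hx).isCoboundedUnder_ge) ?_
    have hIoo : Ioo (0:ℝ) t ∈ 𝓝[>] (0:ℝ) := Ioo_mem_nhdsGT_of_mem ⟨le_refl 0, ht0⟩
    filter_upwards [hIoo] with u hu
    exact hmono x hx u t hu.1 (le_of_lt hu.2) ht
  have heqls : ∀ (x : Fin n → ℝ), (∀ i, 0 < x i) →
      Filter.limsup (fun t : ℝ => M (fun i => t * x i) / t) (𝓝[>] (0:ℝ))
        = Filter.liminf (fun t : ℝ => M (fun i => t * x i) / t) (𝓝[>] (0:ℝ)) := by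
    intro x hx
    refine le_antisymm ?_ (Filter.liminf_le_limsup (hbddAb x hx) (hbddBe x hx))
    refine Filter.limsup_le_of_le ((hbddBe x hx).isCoboundedUnder_le) ?_
    filter_upwards [hJmem x hx] with t ht
    exact hle_liminf x hx t ht
  refine ⟨?_, ?_, ?_⟩
  · intro x hx
    rw [hfil x hx]
    exact heqls x hx
  · intro x y hx hy
    have hz : ∀ i, 0 < (x i + y i) / 2 := fun i => by have := hx i; have := hy i; linarith
    rw [hfil x hx, hfil y hy, hfil _ hz]
    have htx : Filter.Tendsto (fun t : ℝ => M (fun i => t * x i) / t) (𝓝[>] (0:ℝ))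
        (𝓝 (Filter.liminf (fun t : ℝ => M (fun i => t * x i) / t) (𝓝[>] (0:ℝ)))) :=
      tendsto_of_liminf_eq_limsup rfl (heqls x hx) (hbddAb x hx) (hbddBe x hx)
    have hty : Filter.Tendsto (fun t : ℝ => M (fun i => t * y i) / t) (𝓝[>] (0:ℝ))
        (𝓝 (Filter.liminf (fun t : ℝ => M (fun i => t * y i) / t) (𝓝[>] (0:ℝ)))) :=
      tendsto_of_liminf_eq_limsup rfl (heqls y hy) (hbddAb y hy) (hbddBe y hy)
    have hsum := (htx.add hty).div_const 2
    have hev : ∀ᶠ t in 𝓝[>] (0:ℝ),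
        (M (fun i => t * x i) / t + M (fun i => t * y i) / t) / 2
          ≤ M (fun i => t * ((x i + y i) / 2)) / t := by
      filter_upwards [hJmem x hx, hJmem y hy, hposEv] with t htx' hty' ht0
      have hc := hconc (fun i => t * x i) (fun i => t * y i) htx' hty'
      have heq : (fun i => ((fun i => t * x i) i + (fun i => t * y i) i) / 2)
          = (fun i => t * ((x i + y i) / 2)) := funext fun i => by ring
      rw [heq] at hc
      have harith : (M (fun i => t * x i) / t + M (fun i => t * y i) / t) / 2
          = ((M (fun i => t * x i) + M (fun i => t * y i)) / 2) / t := by ring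
      rw [harith]
      gcongr
    have hbddBeSum : Filter.IsBoundedUnder (· ≥ ·) (𝓝[>] (0:ℝ))
        (fun t => (M (fun i => t * x i) / t + M (fun i => t * y i) / t) / 2) := by
      refine ⟨0, Filter.eventually_map.2 ?_⟩
      filter_upwards [hJmem x hx, hJmem y hy, hposEv] with t htx' hty' ht0
      have h1 := div_pos (hgpos x t htx') ht0
      have h2 := div_pos (hgpos y t hty') ht0
      linarith
    calc (Filter.liminf (fun t : ℝ => M (fun i => t * x i) / t) (𝓝[>] (0:ℝ))
          + Filter.liminf (fun t : ℝ => M (fun i => t * y i) / t) (𝓝[>] (0:ℝ))) / 2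
        = Filter.liminf (fun t : ℝ =>
            (M (fun i => t * x i) / t + M (fun i => t * y i) / t) / 2) (𝓝[>] (0:ℝ)) :=
          (hsum.liminf_eq).symm
      _ ≤ Filter.liminf (fun t : ℝ => M (fun i => t * ((x i + y i) / 2)) / t)
            (𝓝[>] (0:ℝ)) :=
          Filter.liminf_le_liminf hev hbddBeSum
            ((hbddAb _ hz).isCoboundedUnder_ge)
  · intro x hxI
    have hx : ∀ i, 0 < x i := fun i => hIpos (hxI i)
    rw [hfil x hx]
    have h1 : ∀ i, (1:ℝ) * x i ∈ I := fun i => by rw [one_mul]; exact hxI i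
    have := hle_liminf x hx 1 h1
    simpa using this
end

section
/- Let I be a nonempty open interval with inf I = 0 and let E be a normalizable semideviation on I. Define h̲_E(x) := liminf_{t→0⁺} E*(xt,t)/t and h̄_E(x) := limsup_{t→0⁺} E*(xt,t)/t for x > 0. Assume that for every x > 0 one has −∞ < h̲_E(x) ≤ h̄_E(x) < +∞ and sign(h̲_E(x)) = sign(h̄_E(x)) = sign(x−1). Then for all n ∈ ℕ, x ∈ (0,∞)ⁿ and weight vectors λ: ℰ⁼_{h̲_E}(x,λ) ≤ liminf_{t→0⁺} UD_E(tx,λ)/t and limsup_{t→0⁺} LD_E(tx,λ)/t ≤ ℰ⁺_{h̄_E}(x,λ). -/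
open Set Filter Topology

/-- The weighted sum `e(y) = λ₁E(x₁,y)+⋯+λₙE(xₙ,y)`. -/
noncomputable def eFun (E : ℝ → ℝ → ℝ) {n : ℕ} (x lam : Fin n → ℝ) (y : ℝ) : ℝ :=
  ∑ i, lam i * E (x i) y

/-- Lower semideviation mean `LLD_E(x,λ) = inf {y ∈ I : e(y) ≤ 0}`. -/
noncomputable def LLD (I : Set ℝ) (E : ℝ → ℝ → ℝ) {n : ℕ} (x lam : Fin n → ℝ) : ℝ :=
  sInf {y : ℝ | y ∈ I ∧ eFun E x lam y ≤ 0}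

/-- Upper semideviation mean `UUD_E(x,λ) = sup {y ∈ I : e(y) ≥ 0}`. -/
noncomputable def UUD (I : Set ℝ) (E : ℝ → ℝ → ℝ) {n : ℕ} (x lam : Fin n → ℝ) : ℝ :=
  sSup {y : ℝ | y ∈ I ∧ 0 ≤ eFun E x lam y}

/-- `LD_E(x,λ) = inf {y ∈ I : e(y) < 0}`. -/
noncomputable def LD (I : Set ℝ) (E : ℝ → ℝ → ℝ) {n : ℕ} (x lam : Fin n → ℝ) : ℝ :=
  sInf {y : ℝ | y ∈ I ∧ eFun E x lam y < 0}

/-- `UD_E(x,λ) = sup {y ∈ I : e(y) > 0}`. -/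
noncomputable def UD (I : Set ℝ) (E : ℝ → ℝ → ℝ) {n : ℕ} (x lam : Fin n → ℝ) : ℝ :=
  sSup {y : ℝ | y ∈ I ∧ 0 < eFun E x lam y}

/-- A weight vector: nonnegative entries with positive sum. -/
def IsWeight {n : ℕ} (lam : Fin n → ℝ) : Prop :=
  (∀ i, 0 ≤ lam i) ∧ 0 < ∑ i, lam i

/-- `E` is a semideviation on `I`: for distinct `x, y ∈ I` the sign of `E x y`
coincides with the sign of `x - y`. -/
def IsSemideviation (I : Set ℝ) (E : ℝ → ℝ → ℝ) : Prop :=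
  ∀ x ∈ I, ∀ y ∈ I, x ≠ y → Real.sign (E x y) = Real.sign (x - y)

/-- `E` is a normalizable semideviation on `I`, with `d x = ∂₂E(x,x)`. -/
def IsNormalizable (I : Set ℝ) (E : ℝ → ℝ → ℝ) (d : ℝ → ℝ) : Prop :=
  IsSemideviation I E ∧
  (∀ x ∈ I, ContinuousOn (fun y => E x y) I) ∧
  (∀ x ∈ I, HasDerivWithinAt (fun y => E x y) (d x) I x) ∧
  (∀ x ∈ I, d x < 0) ∧
  ContinuousOn d I

/-- The normalization `E*(x,y) = E(x,y)/(-∂₂E(y,y))`. -/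
noncomputable def nrm (E : ℝ → ℝ → ℝ) (d : ℝ → ℝ) (x y : ℝ) : ℝ :=
  E x y / (-(d y))

/-- `ℰ⁼_h(x,λ) = inf {y > 0 : Σᵢ λᵢ h(xᵢ/y) ≤ 0}`. -/
noncomputable def EEinf (h : ℝ → ℝ) {n : ℕ} (x lam : Fin n → ℝ) : ℝ :=
  sInf {y : ℝ | 0 < y ∧ ∑ i, lam i * h (x i / y) ≤ 0}

/-- `ℰ⁺_h(x,λ) = sup {y > 0 : Σᵢ λᵢ h(xᵢ/y) ≥ 0}`. -/
noncomputable def EEsup (h : ℝ → ℝ) {n : ℕ} (x lam : Fin n → ℝ) : ℝ :=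
  sSup {y : ℝ | 0 < y ∧ 0 ≤ ∑ i, lam i * h (x i / y)}

/-!
For `s > 0` write `t xᵢ = (xᵢ / s) (s t)`. Then `e(s t)`, computed for the vector `t x`, is
`s t · (-∂₂E(s t, s t)) · Σᵢ λᵢ E*((xᵢ / s) u, u) / u` with `u = s t → 0⁺`. If
`Σᵢ λᵢ h̲_E(xᵢ / s) > 0`, the sum is eventually positive, so `s t ≤ UD_E(t x, λ)`, whence
`s ≤ liminf UD_E(t x, λ) / t`; every `s < ℰ⁼_{h̲_E}(x, λ)` is of this kind. Symmetrically, if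
`Σᵢ λᵢ h̄_E(xᵢ / s) < 0` then `LD_E(t x, λ) ≤ s t` eventually, and every `s > ℰ⁺_{h̄_E}(x, λ)` is
of this kind. Since `I` contains an interval `(0, a)`, all the filters involved are just `t → 0⁺`.
-/

lemma Real.sign_eq_one_iff {r : ℝ} : Real.sign r = 1 ↔ 0 < r := by
  refine ⟨fun h => ?_, Real.sign_of_pos⟩
  rcases lt_trichotomy r 0 with hr | rfl | hr
  · rw [Real.sign_of_neg hr] at h; norm_num at h
  · rw [Real.sign_zero] at h; norm_num at h
  · exact hr

lemma Real.sign_eq_neg_one_iff {r : ℝ} : Real.sign r = -1 ↔ r < 0 := by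
  refine ⟨fun h => ?_, Real.sign_of_neg⟩
  rcases lt_trichotomy r 0 with hr | rfl | hr
  · exact hr
  · rw [Real.sign_zero] at h; norm_num at h
  · rw [Real.sign_of_pos hr] at h; norm_num at h

lemma exists_pos_forall_lt {n : ℕ} {x : Fin n → ℝ} (hx : ∀ i, 0 < x i) :
    ∃ s, (∀ i, s < x i) ∧ 0 < s :=
  (((eventually_all.2 fun i => eventually_lt_nhds (hx i)).filter_mono nhdsWithin_le_nhds).and
    (self_mem_nhdsWithin (s := Ioi (0 : ℝ)))).exists

lemma tendsto_const_mul_nhdsGT_zero {c : ℝ} (hc : 0 < c) :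
    Tendsto (c * ·) (𝓝[>] (0 : ℝ)) (𝓝[>] 0) :=
  tendsto_nhdsWithin_of_tendsto_nhds_of_eventually_within _
    ((continuous_const_mul c).tendsto' 0 0 (mul_zero c) |>.mono_left nhdsWithin_le_nhds)
    (eventually_nhdsWithin_of_forall fun _ ht => mul_pos hc ht)

lemma Set.OrdConnected.eventually_mem_nhdsGT_of_isGLB_zero {I : Set ℝ} (hIoc : I.OrdConnected)
    (hIo : IsOpen I) (hne : I.Nonempty) (hglb : IsGLB I 0) : ∀ᶠ t in 𝓝[>] 0, t ∈ I := by
  obtain ⟨a, haI⟩ := hne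
  have hzero : (0 : ℝ) ∉ I := fun h0 =>
    have hI : ∀ᶠ t in 𝓝[<] 0, t ∈ I := mem_nhdsWithin_of_mem_nhds (hIo.mem_nhds h0)
    let ⟨_, htI, ht⟩ := (hI.and self_mem_nhdsWithin).exists
    (hglb.1 htI).not_gt ht
  have ha : 0 < a := (hglb.1 haI).lt_of_ne fun h => hzero (h ▸ haI)
  filter_upwards [Ioo_mem_nhdsGT ha] with y hy
  obtain ⟨c, hcI, -, hcy⟩ := hglb.exists_between hy.1
  exact hIoc.out hcI haI ⟨hcy.le, hy.2.le⟩

lemma pos_of_sign_eq_sign_sub_one {a z : ℝ} (h : Real.sign a = Real.sign (z - 1)) (hz : 1 < z) :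
    0 < a :=
  Real.sign_eq_one_iff.1 (h.trans (Real.sign_of_pos (sub_pos.2 hz)))

lemma neg_of_sign_eq_sign_sub_one {a z : ℝ} (h : Real.sign a = Real.sign (z - 1)) (hz : z < 1) :
    a < 0 :=
  Real.sign_eq_neg_one_iff.1 (h.trans (Real.sign_of_neg (sub_neg.2 hz)))

namespace IsWeight

variable {n : ℕ} {lam f : Fin n → ℝ}

lemma exists_pos (hlam : IsWeight lam) : ∃ j, 0 < lam j := by
  by_contra! h
  exact hlam.2.not_ge (Finset.sum_nonpos fun i _ => h i)

lemma sum_mul_pos (hlam : IsWeight lam) (hf : ∀ i, 0 < f i) : 0 < ∑ i, lam i * f i := by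
  obtain ⟨j, hj⟩ := hlam.exists_pos
  exact Finset.sum_pos' (fun i _ => mul_nonneg (hlam.1 i) (hf i).le)
    ⟨j, Finset.mem_univ j, mul_pos hj (hf j)⟩

lemma sum_mul_neg (hlam : IsWeight lam) (hf : ∀ i, f i < 0) : ∑ i, lam i * f i < 0 := by
  simpa [Finset.sum_neg_distrib] using hlam.sum_mul_pos (f := -f) fun i => neg_pos.2 (hf i)

end IsWeight

lemma eventually_pos_sum_mul {α ι : Type*} [Fintype ι] {l : Filter α} {u : ι → α → ℝ}
    {ℓ lam : ι → ℝ} (hlam : ∀ i, 0 ≤ lam i) (hu : ∀ i, ∀ b < ℓ i, ∀ᶠ a in l, b < u i a)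
    (hℓ : 0 < ∑ i, lam i * ℓ i) : ∀ᶠ a in l, 0 < ∑ i, lam i * u i a := by
  obtain ⟨ε, hε, hε0⟩ : ∃ ε, 0 < ∑ i, lam i * (ℓ i - ε) ∧ 0 < ε := by
    have hcont : Tendsto (fun ε => ∑ i, lam i * (ℓ i - ε)) (𝓝[>] 0) (𝓝 (∑ i, lam i * ℓ i)) :=
      ((Continuous.tendsto' (by fun_prop) 0 _ (by simp)).mono_left nhdsWithin_le_nhds)
    exact ((hcont.eventually (lt_mem_nhds hℓ)).and self_mem_nhdsWithin).exists
  filter_upwards [eventually_all.2 fun i => hu i _ (sub_lt_self _ hε0)] with a ha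
  exact hε.trans_le (Finset.sum_le_sum fun i _ => mul_le_mul_of_nonneg_left (ha i).le (hlam i))

lemma eFun_eq_mul_sum_nrm_div (E : ℝ → ℝ → ℝ) (d : ℝ → ℝ) {n : ℕ} (z lam : Fin n → ℝ) {y : ℝ}
    (hy : y ≠ 0) (hd : d y ≠ 0) :
    eFun E z lam y = y * -d y * ∑ i, lam i * (nrm E d (z i) y / y) := by
  unfold eFun nrm
  rw [Finset.mul_sum]
  refine Finset.sum_congr rfl fun i _ => ?_
  field_simp

lemma EEinf_le_of_forall {h : ℝ → ℝ} {n : ℕ} {x lam : Fin n → ℝ} {L : ℝ}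
    (h₀ : ∃ s > 0, 0 < ∑ i, lam i * h (x i / s))
    (hL : ∀ s > 0, 0 < ∑ i, lam i * h (x i / s) → s ≤ L) : EEinf h x lam ≤ L := by
  obtain ⟨s₀, hs₀, hsum₀⟩ := h₀
  refine le_of_forall_lt_imp_le_of_dense fun c hc => ?_
  rcases le_or_gt c s₀ with hcs | hcs
  · exact hcs.trans (hL s₀ hs₀ hsum₀)
  · have hc₀ : 0 < c := hs₀.trans hcs
    rw [EEinf] at hc
    exact hL c hc₀ (not_le.1 fun hle => hc.not_ge (csInf_le ⟨0, fun y hy => hy.1.le⟩ ⟨hc₀, hle⟩))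

lemma le_EEsup_of_forall {h : ℝ → ℝ} {n : ℕ} {x lam : Fin n → ℝ} {L : ℝ}
    (h₀ : ∃ s > 0, 0 ≤ ∑ i, lam i * h (x i / s))
    (hbdd : BddAbove {y : ℝ | 0 < y ∧ 0 ≤ ∑ i, lam i * h (x i / y)})
    (hL : ∀ s > 0, ∑ i, lam i * h (x i / s) < 0 → L ≤ s) : L ≤ EEsup h x lam := by
  obtain ⟨s₀, hs₀, hsum₀⟩ := h₀
  refine le_of_forall_gt_imp_ge_of_dense fun c hc => ?_
  have hc₀ : 0 < c := hs₀.trans_le ((le_csSup hbdd (a := s₀) ⟨hs₀, hsum₀⟩).trans_lt hc).le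
  exact hL c hc₀ (not_le.1 fun hle => (le_csSup hbdd ⟨hc₀, hle⟩).not_gt hc)

section SemideviationMeans

variable {I : Set ℝ} {E : ℝ → ℝ → ℝ} {d : ℝ → ℝ} {n : ℕ} {z x lam : Fin n → ℝ}

lemma IsSemideviation.neg_of_lt (hE : IsSemideviation I E) {u v : ℝ} (hu : u ∈ I) (hv : v ∈ I)
    (huv : u < v) : E u v < 0 := by
  have h := hE u hu v hv huv.ne
  rwa [Real.sign_of_neg (sub_neg.2 huv), Real.sign_eq_neg_one_iff] at h

lemma IsSemideviation.mem_upperBounds_setOf_eFun_pos (hE : IsSemideviation I E)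
    (hlam : ∀ i, 0 ≤ lam i) (hz : ∀ i, z i ∈ I) {B : ℝ} (hB : ∀ i, z i ≤ B) :
    B ∈ upperBounds {y | y ∈ I ∧ 0 < eFun E z lam y} := fun _ ⟨hy, hpos⟩ =>
  not_lt.1 fun hBy => hpos.not_ge <| Finset.sum_nonpos fun i _ =>
    mul_nonpos_of_nonneg_of_nonpos (hlam i) (hE.neg_of_lt (hz i) hy ((hB i).trans_lt hBy)).le

lemma IsSemideviation.UD_le (hE : IsSemideviation I E) (hlam : ∀ i, 0 ≤ lam i)
    (hz : ∀ i, z i ∈ I) {B : ℝ} (hB : ∀ i, z i ≤ B) (hB₀ : 0 ≤ B) : UD I E z lam ≤ B :=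
  Real.sSup_le (hE.mem_upperBounds_setOf_eFun_pos hlam hz hB) hB₀

lemma IsSemideviation.le_UD (hE : IsSemideviation I E) (hlam : ∀ i, 0 ≤ lam i)
    (hz : ∀ i, z i ∈ I) {B : ℝ} (hB : ∀ i, z i ≤ B) {y : ℝ} (hy : y ∈ I)
    (hpos : 0 < eFun E z lam y) : y ≤ UD I E z lam :=
  le_csSup ⟨B, hE.mem_upperBounds_setOf_eFun_pos hlam hz hB⟩ ⟨hy, hpos⟩

lemma LD_nonneg (hI : ∀ y ∈ I, 0 ≤ y) : 0 ≤ LD I E z lam :=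
  Real.sInf_nonneg fun y hy => hI y hy.1

lemma LD_le (hI : ∀ y ∈ I, 0 ≤ y) {y : ℝ} (hy : y ∈ I) (hneg : eFun E z lam y < 0) :
    LD I E z lam ≤ y :=
  csInf_le ⟨0, fun y' hy' => hI y' hy'.1⟩ ⟨hy, hneg⟩

lemma eventually_eFun_mul_eq (hd : ∀ y ∈ I, d y < 0) (hI : ∀ᶠ t in 𝓝[>] 0, t ∈ I)
    {s : ℝ} (hs : 0 < s) :
    ∀ᶠ t in 𝓝[>] 0, s * t ∈ I ∧ 0 < s * t * -d (s * t) ∧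
      eFun E (fun i => t * x i) lam (s * t)
        = s * t * -d (s * t) * ∑ i, lam i * (nrm E d (x i / s * (s * t)) (s * t) / (s * t)) := by
  filter_upwards [(tendsto_const_mul_nhdsGT_zero hs).eventually hI, self_mem_nhdsWithin]
    with t hst (ht : 0 < t)
  have hd' := hd _ hst
  refine ⟨hst, mul_pos (mul_pos hs ht) (neg_pos.2 hd'), ?_⟩
  rw [eFun_eq_mul_sum_nrm_div E d _ lam (mul_pos hs ht).ne' hd'.ne]
  congr 2 with i
  field_simp

lemma IsSemideviation.le_liminf_UD_div (hE : IsSemideviation I E) (hd : ∀ y ∈ I, d y < 0)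
    (hI : ∀ᶠ t in 𝓝[>] 0, t ∈ I) (hx : ∀ i, 0 < x i) (hlam : ∀ i, 0 ≤ lam i) {s : ℝ}
    (hs : 0 < s) (hsum : ∀ᶠ u in 𝓝[>] 0, 0 < ∑ i, lam i * (nrm E d (x i / s * u) u / u)) :
    s ≤ liminf (fun t => UD I E (fun i => t * x i) lam / t) (𝓝[>] 0) := by
  set M := ∑ i, x i
  have hxM (i : Fin n) : x i ≤ M := Finset.single_le_sum (fun k _ => (hx k).le) (Finset.mem_univ i)
  have hM : 0 ≤ M := Finset.sum_nonneg fun i _ => (hx i).le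
  have hbounds : ∀ᶠ t in 𝓝[>] 0,
      s ≤ UD I E (fun i => t * x i) lam / t ∧ UD I E (fun i => t * x i) lam / t ≤ M := by
    filter_upwards [eventually_eFun_mul_eq (E := E) (x := x) (lam := lam) hd hI hs,
      (tendsto_const_mul_nhdsGT_zero hs).eventually hsum,
      eventually_all.2 fun i => (tendsto_const_mul_nhdsGT_zero (hx i)).eventually hI,
      self_mem_nhdsWithin] with t ⟨hst, hfac, he⟩ hsum_st hxt (ht : 0 < t)
    have htx (i : Fin n) : t * x i ∈ I := mul_comm (x i) t ▸ hxt i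
    have htM (i : Fin n) : t * x i ≤ t * M := mul_le_mul_of_nonneg_left (hxM i) ht.le
    rw [le_div_iff₀ ht, div_le_iff₀ ht, mul_comm M]
    exact ⟨hE.le_UD hlam htx htM hst (he ▸ mul_pos hfac hsum_st),
      hE.UD_le hlam htx htM (mul_nonneg ht.le hM)⟩
  exact le_liminf_of_le (isCoboundedUnder_ge_of_eventually_le _ (hbounds.mono fun _ h => h.2))
    (hbounds.mono fun _ h => h.1)

lemma limsup_LD_div_le (hI₀ : ∀ y ∈ I, 0 ≤ y) (hd : ∀ y ∈ I, d y < 0)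
    (hI : ∀ᶠ t in 𝓝[>] 0, t ∈ I) {s : ℝ} (hs : 0 < s)
    (hsum : ∀ᶠ u in 𝓝[>] 0, ∑ i, lam i * (nrm E d (x i / s * u) u / u) < 0) :
    limsup (fun t => LD I E (fun i => t * x i) lam / t) (𝓝[>] 0) ≤ s := by
  have hbounds : ∀ᶠ t in 𝓝[>] 0,
      LD I E (fun i => t * x i) lam / t ≤ s ∧ 0 ≤ LD I E (fun i => t * x i) lam / t := by
    filter_upwards [eventually_eFun_mul_eq (E := E) (x := x) (lam := lam) hd hI hs,
      (tendsto_const_mul_nhdsGT_zero hs).eventually hsum,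
      self_mem_nhdsWithin] with t ⟨hst, hfac, he⟩ hsum_st (ht : 0 < t)
    rw [div_le_iff₀ ht]
    exact ⟨LD_le hI₀ hst (he ▸ mul_neg_of_pos_of_neg hfac hsum_st),
      div_nonneg (LD_nonneg hI₀) ht.le⟩
  exact limsup_le_of_le (isCoboundedUnder_le_of_eventually_le _ (hbounds.mono fun _ h => h.2))
    (hbounds.mono fun _ h => h.1)

lemma IsSemideviation.EEinf_le_liminf_UD_div (hE : IsSemideviation I E) (hd : ∀ y ∈ I, d y < 0)
    (hI : ∀ᶠ t in 𝓝[>] 0, t ∈ I) (hx : ∀ i, 0 < x i) (hlam : IsWeight lam) {h : ℝ → ℝ}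
    (hh : ∀ z > 0, h z = liminf (fun u => nrm E d (z * u) u / u) (𝓝[>] 0))
    (hbdd : ∀ z > 0, IsBoundedUnder (· ≥ ·) (𝓝[>] 0) fun u => nrm E d (z * u) u / u)
    (hpos : ∀ z > 1, 0 < h z) :
    EEinf h x lam ≤ liminf (fun t => UD I E (fun i => t * x i) lam / t) (𝓝[>] 0) := by
  obtain ⟨s₀, hs₀x, hs₀⟩ := exists_pos_forall_lt hx
  refine EEinf_le_of_forall
    ⟨s₀, hs₀, hlam.sum_mul_pos fun i => hpos _ ((one_lt_div hs₀).2 (hs₀x i))⟩ fun s hs hsum => ?_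
  refine hE.le_liminf_UD_div hd hI hx hlam.1 hs
    (eventually_pos_sum_mul hlam.1 (fun i b hb => ?_) hsum)
  have hz : 0 < x i / s := div_pos (hx i) hs
  exact eventually_lt_of_lt_liminf (hh _ hz ▸ hb) (hbdd _ hz)

lemma limsup_LD_div_le_EEsup (hI₀ : ∀ y ∈ I, 0 ≤ y) (hd : ∀ y ∈ I, d y < 0)
    (hI : ∀ᶠ t in 𝓝[>] 0, t ∈ I) (hx : ∀ i, 0 < x i) (hlam : IsWeight lam) {h : ℝ → ℝ}
    (hh : ∀ z > 0, h z = limsup (fun u => nrm E d (z * u) u / u) (𝓝[>] 0))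
    (hbdd : ∀ z > 0, IsBoundedUnder (· ≤ ·) (𝓝[>] 0) fun u => nrm E d (z * u) u / u)
    (hpos : ∀ z > 1, 0 < h z) (hneg : ∀ z > 0, z < 1 → h z < 0) :
    limsup (fun t => LD I E (fun i => t * x i) lam / t) (𝓝[>] 0) ≤ EEsup h x lam := by
  obtain ⟨s₀, hs₀x, hs₀⟩ := exists_pos_forall_lt hx
  obtain ⟨B, hB⟩ := (Set.finite_range x).bddAbove
  refine le_EEsup_of_forall
    ⟨s₀, hs₀, (hlam.sum_mul_pos fun i => hpos _ ((one_lt_div hs₀).2 (hs₀x i))).le⟩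
    ⟨B, fun y ⟨hy, hsum⟩ => not_lt.1 fun hBy => hsum.not_gt <| hlam.sum_mul_neg fun i =>
      hneg _ (div_pos (hx i) hy) ((div_lt_one hy).2 ((hB (mem_range_self i)).trans_lt hBy))⟩
    fun s hs hsum => limsup_LD_div_le hI₀ hd hI hs ?_
  have hsum_neg := eventually_pos_sum_mul (l := 𝓝[>] 0)
    (u := fun i u => -(nrm E d (x i / s * u) u / u))
    (ℓ := fun i => -h (x i / s)) hlam.1 (fun i b hb => ?_)
    (by simpa [Finset.sum_neg_distrib] using hsum)
  · simpa [Finset.sum_neg_distrib] using hsum_neg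
  · have hz : 0 < x i / s := div_pos (hx i) hs
    filter_upwards [eventually_lt_of_limsup_lt (hh _ hz ▸ lt_neg_of_lt_neg hb) (hbdd _ hz)]
      with u hu
    exact lt_neg_of_lt_neg hu

end SemideviationMeans

/-- Theorem: estimates of the lower and upper homogenizations of semideviation means
by the homogeneous semideviation means generated by `h̲_E` and `h̄_E`. -/
theorem statement10 (I : Set ℝ) (hIoc : I.OrdConnected) (hIo : IsOpen I)
    (hne : I.Nonempty) (hglb : IsGLB I 0) (E : ℝ → ℝ → ℝ) (d : ℝ → ℝ)
    (hE : IsNormalizable I E d) (hlo hhi : ℝ → ℝ)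
    (hloDef : ∀ x : ℝ, 0 < x → hlo x =
      Filter.liminf (fun t : ℝ => nrm E d (x * t) t / t)
        ((𝓝[>] (0:ℝ)) ⊓ Filter.principal {t : ℝ | x * t ∈ I ∧ t ∈ I}))
    (hhiDef : ∀ x : ℝ, 0 < x → hhi x =
      Filter.limsup (fun t : ℝ => nrm E d (x * t) t / t)
        ((𝓝[>] (0:ℝ)) ⊓ Filter.principal {t : ℝ | x * t ∈ I ∧ t ∈ I}))
    (hbdd : ∀ x : ℝ, 0 < x → ∃ C : ℝ,
      ∀ᶠ t in (𝓝[>] (0:ℝ)) ⊓ Filter.principal {t : ℝ | x * t ∈ I ∧ t ∈ I},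
        |nrm E d (x * t) t / t| ≤ C)
    (hsign : ∀ x : ℝ, 0 < x →
      Real.sign (hlo x) = Real.sign (x - 1) ∧ Real.sign (hhi x) = Real.sign (x - 1)) :
    ∀ (n : ℕ) (x lam : Fin n → ℝ), (∀ i, 0 < x i) → IsWeight lam →
      EEinf hlo x lam
          ≤ Filter.liminf (fun t : ℝ => UD I E (fun i => t * x i) lam / t) (homFilter I x) ∧
      Filter.limsup (fun t : ℝ => LD I E (fun i => t * x i) lam / t) (homFilter I x)
          ≤ EEsup hhi x lam := by
  intro n x lam hx hlam
  obtain ⟨hsd, -, -, hd, -⟩ := hE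
  have hI := hIoc.eventually_mem_nhdsGT_of_isGLB_zero hIo hne hglb
  have hfilter (z : ℝ) (hz : 0 < z) :
      𝓝[>] 0 ⊓ 𝓟 {t : ℝ | z * t ∈ I ∧ t ∈ I} = 𝓝[>] 0 :=
    inf_eq_left.2 (le_principal_iff.2 (((tendsto_const_mul_nhdsGT_zero hz).eventually hI).and hI))
  have hhom : homFilter I x = 𝓝[>] 0 :=
    inf_eq_left.2 (le_principal_iff.2 (eventually_all.2 fun i =>
      ((tendsto_const_mul_nhdsGT_zero (hx i)).eventually hI).mono fun t ht => by rwa [mul_comm]))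
  have hbdd' (z : ℝ) (hz : 0 < z) :
      IsBoundedUnder (· ≤ ·) (𝓝[>] 0) fun t => |nrm E d (z * t) t / t| := by
    obtain ⟨C, hC⟩ := hbdd z hz
    exact isBoundedUnder_of_eventually_le (hfilter z hz ▸ hC)
  rw [hhom]
  exact ⟨hsd.EEinf_le_liminf_UD_div hd hI hx hlam (fun z hz => hfilter z hz ▸ hloDef z hz)
      (fun z hz => (isBoundedUnder_le_abs.1 (hbdd' z hz)).2)
      (fun z hz => pos_of_sign_eq_sign_sub_one (hsign z (zero_lt_one.trans hz)).1 hz),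
    limsup_LD_div_le_EEsup (fun _ hy => hglb.1 hy) hd hI hx hlam
      (fun z hz => hfilter z hz ▸ hhiDef z hz)
      (fun z hz => (isBoundedUnder_le_abs.1 (hbdd' z hz)).1)
      (fun z hz => pos_of_sign_eq_sign_sub_one (hsign z (zero_lt_one.trans hz)).2 hz)
      (fun z hz hz1 => neg_of_sign_eq_sign_sub_one (hsign z hz).2 hz1)⟩
end

section
/- Let I be a nonempty open interval with inf I = 0 and let E be a normalizable semideviation on I such that E* is concave on I × I and lim_{t→0⁺} E*(xt,t) = 0 for every x > 0. Then for every x > 0 the limit h_E(x) := lim_{t→0⁺} E*(xt,t)/t exists and is a real number, sign(h_E(x)) = sign(x−1), and the function h_E : (0,∞) → ℝ is concave, nondecreasing on (0,∞), and strictly increasing on (0,1). -/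
/-!
For fixed `x > 0`, `t ↦ E*(xt,t)` is the restriction of the concave `E*` to a ray through the
origin and tends to `0` as `t → 0⁺`, so `E*(xt,t)/t` is a secant slope from the origin and is
nonincreasing in `t`; `h_E(x)` is its supremum. For fixed `t`, `x ↦ E*(xt,t)/t` is concave,
vanishes at `x = 1` and has the sign of `x - 1`; comparing `x > 1` with `x = 1/2` through this
concavity bounds the slopes from above, so the limit is finite. Concavity passes to the limit, and
a concave function on `(0,∞)` that vanishes at `1` and is positive on `(1,∞)` is nondecreasing,
and strictly increasing on `(0,1]`.
-/

open Set Filter Topology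

theorem Real.pos_of_sign_eq_sign_of_pos {r s : ℝ} (h : Real.sign r = Real.sign s)
    (hs : 0 < s) : 0 < r := by
  rw [Real.sign_of_pos hs] at h
  rcases lt_trichotomy r 0 with hr | rfl | hr
  · norm_num [Real.sign_of_neg hr] at h
  · norm_num [Real.sign_zero] at h
  · exact hr

theorem Real.neg_of_sign_eq_sign_of_neg {r s : ℝ} (h : Real.sign r = Real.sign s)
    (hs : s < 0) : r < 0 :=
  neg_pos.1 <| Real.pos_of_sign_eq_sign_of_pos (by rw [Real.sign_neg, Real.sign_neg, h])
    (neg_pos.2 hs)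

theorem ConcaveOn.antitoneOn_div_of_tendsto_zero {φ : ℝ → ℝ} {b : ℝ}
    (hφ : ConcaveOn ℝ (Ioo 0 b) φ) (h0 : Tendsto φ (𝓝[>] 0) (𝓝 0)) :
    AntitoneOn (fun t => φ t / t) (Ioo 0 b) := by
  intro s hs t ht hst
  rcases hst.eq_or_lt with rfl | hst
  · rfl
  have hslope : (φ t - φ s) / (t - s) ≤ φ s / s := by
    have hlim : Tendsto (fun u => (φ s - φ u) / (s - u)) (𝓝[>] 0) (𝓝 ((φ s - 0) / (s - 0))) :=
      (tendsto_const_nhds.sub h0).div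
        (tendsto_const_nhds.sub (tendsto_nhdsWithin_of_tendsto_nhds tendsto_id))
        (by simpa using hs.1.ne')
    rw [sub_zero, sub_zero] at hlim
    refine ge_of_tendsto hlim ?_
    filter_upwards [Ioo_mem_nhdsGT hs.1] with u hu
    exact hφ.slope_anti_adjacent ⟨hu.1, hu.2.trans hs.2⟩ ht hu.2 hst
  have ht0 : 0 < t := hs.1.trans hst
  rw [div_le_iff₀ (sub_pos.2 hst)] at hslope
  rw [div_le_iff₀ ht0]
  calc φ t ≤ φ s + φ s / s * (t - s) := by linarith
    _ = φ s / s * t := by field_simp [hs.1.ne']; ring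

theorem AntitoneOn.exists_tendsto_nhdsGT {f : ℝ → ℝ} {a b C : ℝ} (hab : a < b)
    (hf : AntitoneOn f (Ioo a b)) (hC : ∀ᶠ t in 𝓝[>] a, f t ≤ C) :
    ∃ l, Tendsto f (𝓝[>] a) (𝓝 l) ∧ ∀ t ∈ Ioo a b, f t ≤ l := by
  have hbdd : BddAbove (f '' Ioo a b) := by
    refine ⟨C, forall_mem_image.2 fun t ht => ?_⟩
    obtain ⟨s, hsC, hs⟩ := (hC.and (Ioo_mem_nhdsGT ht.1)).exists
    exact (hf ⟨hs.1, hs.2.trans ht.2⟩ ht hs.2.le).trans hsC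
  exact ⟨_, hf.tendsto_nhdsWithin_Ioo_right (nonempty_Ioo.2 hab) hbdd,
    fun t ht => le_csSup hbdd (mem_image_of_mem f ht)⟩

theorem ConcaveOn.of_tendsto {V ι : Type*} [AddCommGroup V] [Module ℝ V] {l : Filter ι}
    [l.NeBot] {s : Set V} {f : ι → V → ℝ} {g : V → ℝ} (hs : Convex ℝ s)
    (hf : ∀ x ∈ s, ∀ y ∈ s, ∀ᶠ i in l, ConcaveOn ℝ (segment ℝ x y) (f i))
    (hg : ∀ x ∈ s, Tendsto (fun i => f i x) l (𝓝 (g x))) : ConcaveOn ℝ s g := by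
  refine ⟨hs, fun x hx y hy a b ha hb hab => ?_⟩
  refine le_of_tendsto_of_tendsto (((hg x hx).const_smul a).add ((hg y hy).const_smul b))
    (hg _ (hs hx hy ha hb hab)) ?_
  filter_upwards [hf x hx y hy] with i hi
  exact hi.2 (left_mem_segment ℝ x y) (right_mem_segment ℝ x y) ha hb hab

theorem ConcaveOn.monotoneOn_of_eventually_ge {f : ℝ → ℝ} {a m : ℝ}
    (hf : ConcaveOn ℝ (Ioi a) f) (hm : ∀ᶠ x in atTop, m ≤ f x) : MonotoneOn f (Ioi a) := by
  intro x hx y hy hxy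
  rcases hxy.eq_or_lt with rfl | hxy
  · rfl
  have hlim : Tendsto (fun z => (m - f y) / (z - y)) atTop (𝓝 0) :=
    tendsto_const_nhds.div_atTop (tendsto_atTop_add_const_right _ _ tendsto_id)
  have hslope : 0 ≤ (f y - f x) / (y - x) := by
    refine le_of_tendsto hlim ?_
    filter_upwards [hm, eventually_gt_atTop y] with z hmz hyz
    calc (m - f y) / (z - y) ≤ (f z - f y) / (z - y) := by gcongr
      _ ≤ (f y - f x) / (y - x) := hf.slope_anti_adjacent hx (lt_trans hy hyz) hxy hyz
  simpa using (le_div_iff₀ (sub_pos.2 hxy)).1 hslope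

theorem ConcaveOn.strictMonoOn_of_lt {f : ℝ → ℝ} {s : Set ℝ} {b c : ℝ} (hf : ConcaveOn ℝ s f)
    (hc : c ∈ s) (hbc : b < c) (hfbc : f b < f c) : StrictMonoOn f (s ∩ Iic b) := by
  have hlt : ∀ y ∈ s, y ≤ b → f y < f c := by
    intro y hy hyb
    rcases hyb.eq_or_lt with rfl | hyb
    · exact hfbc
    have hslope : 0 < (f b - f y) / (b - y) :=
      (div_pos (sub_pos.2 hfbc) (sub_pos.2 hbc)).trans_le (hf.slope_anti_adjacent hy hc hyb hbc)
    linarith [(div_pos_iff_of_pos_right (sub_pos.2 hyb)).1 hslope]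
  intro x hx y hy hxy
  have hyc : y < c := hy.2.trans_lt hbc
  have hslope : 0 < (f y - f x) / (y - x) :=
    (div_pos (sub_pos.2 (hlt y hy.1 hy.2)) (sub_pos.2 hyc)).trans_le
      (hf.slope_anti_adjacent hx.1 hc hxy hyc)
  linarith [(div_pos_iff_of_pos_right (sub_pos.2 hxy)).1 hslope]

section Interval

variable {I : Set ℝ}

theorem pos_of_mem_of_isGLB_zero (hIo : IsOpen I) (hglb : IsGLB I 0) {x : ℝ} (hx : x ∈ I) :
    0 < x := by
  refine (hglb.1 hx).lt_of_ne fun hx0 => ?_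
  subst hx0
  obtain ⟨y, hyI, hy0⟩ := Filter.nonempty_of_mem
    (inter_mem (mem_nhdsWithin_of_mem_nhds (hIo.mem_nhds hx)) self_mem_nhdsWithin :
      I ∩ Iio 0 ∈ 𝓝[<] (0 : ℝ))
  exact (hglb.1 hyI).not_gt hy0

theorem mem_nhdsGT_zero_of_isGLB (hIoc : I.OrdConnected) (hIo : IsOpen I) (hglb : IsGLB I 0) :
    I ∈ 𝓝[>] (0 : ℝ) := by
  obtain ⟨c, hc⟩ := hglb.nonempty
  refine mem_of_superset (Ioo_mem_nhdsGT (pos_of_mem_of_isGLB_zero hIo hglb hc)) fun t ht => ?_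
  obtain ⟨a, haI, -, hat⟩ := hglb.exists_between ht.1
  exact hIoc.out haI hc ⟨hat.le, ht.2.le⟩

theorem eventually_mul_mem_nhdsGT_zero (hI : I ∈ 𝓝[>] (0 : ℝ)) {x : ℝ} (hx : 0 < x) :
    ∀ᶠ t in 𝓝[>] (0 : ℝ), x * t ∈ I ∧ t ∈ I := by
  have hmul : Tendsto (x * ·) (𝓝[>] (0 : ℝ)) (𝓝[>] 0) :=
    tendsto_nhdsWithin_iff.2 ⟨((continuous_const_mul x).tendsto' 0 0 (mul_zero x)).mono_left
      nhdsWithin_le_nhds, eventually_mem_nhdsWithin.mono fun t ht => mul_pos hx ht⟩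
  exact (hmul.eventually hI).and hI

theorem nhdsGT_zero_inf_principal_mul_mem (hI : I ∈ 𝓝[>] (0 : ℝ)) {x : ℝ} (hx : 0 < x) :
    (𝓝[>] (0 : ℝ)) ⊓ 𝓟 {t : ℝ | x * t ∈ I ∧ t ∈ I} = 𝓝[>] 0 :=
  inf_eq_left.2 (le_principal_iff.2 (eventually_mul_mem_nhdsGT_zero hI hx))

theorem ConcaveOn.comp_ray {F : ℝ → ℝ → ℝ}
    (hF : ConcaveOn ℝ (I ×ˢ I) (fun p : ℝ × ℝ => F p.1 p.2)) (x : ℝ) :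
    ConcaveOn ℝ {t | x * t ∈ I ∧ t ∈ I} (fun t => F (x * t) t) := by
  have h := hF.comp_linearMap (LinearMap.toSpanSingleton ℝ (ℝ × ℝ) (x, 1))
  simpa [Function.comp_def, preimage, mul_comm] using h

theorem ConcaveOn.comp_slice {F : ℝ → ℝ → ℝ}
    (hF : ConcaveOn ℝ (I ×ˢ I) (fun p : ℝ × ℝ => F p.1 p.2)) (t : ℝ) :
    ConcaveOn ℝ {x | x * t ∈ I ∧ t ∈ I} (fun x => F (x * t) t) := by
  have h := hF.comp_affineMap (AffineMap.lineMap ((0 : ℝ), t) (t, t))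
  simpa [Function.comp_def, preimage, AffineMap.lineMap_apply] using h

end Interval

section Normalizable

variable {I : Set ℝ} {E : ℝ → ℝ → ℝ} {d : ℝ → ℝ} {x y : ℝ}

theorem IsSemideviation.apply_pos (hE : IsSemideviation I E) (hx : x ∈ I) (hy : y ∈ I)
    (hyx : y < x) : 0 < E x y :=
  Real.pos_of_sign_eq_sign_of_pos (hE x hx y hy hyx.ne') (sub_pos.2 hyx)

theorem IsSemideviation.apply_neg (hE : IsSemideviation I E) (hx : x ∈ I) (hy : y ∈ I)
    (hxy : x < y) : E x y < 0 :=
  Real.neg_of_sign_eq_sign_of_neg (hE x hx y hy hxy.ne) (sub_neg.2 hxy)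

theorem IsNormalizable.apply_self (hE : IsNormalizable I E d) (hIo : IsOpen I) (hx : x ∈ I) :
    E x x = 0 := by
  have hI : I ∈ 𝓝 x := hIo.mem_nhds hx
  have hcont : Tendsto (E x) (𝓝 x) (𝓝 (E x x)) := ((hE.2.1 x hx).continuousAt hI).tendsto
  refine le_antisymm (le_of_tendsto (hcont.mono_left (nhdsWithin_le_nhds (s := Ioi x))) ?_)
    (ge_of_tendsto (hcont.mono_left (nhdsWithin_le_nhds (s := Iio x))) ?_)
  · filter_upwards [mem_nhdsWithin_of_mem_nhds hI, self_mem_nhdsWithin] with y hy hxy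
    exact (hE.1.apply_neg hx hy hxy).le
  · filter_upwards [mem_nhdsWithin_of_mem_nhds hI, self_mem_nhdsWithin] with y hy hyx
    exact (hE.1.apply_pos hx hy hyx).le

theorem IsNormalizable.nrm_pos (hE : IsNormalizable I E d) (hx : x ∈ I) (hy : y ∈ I)
    (hyx : y < x) : 0 < nrm E d x y :=
  div_pos (hE.1.apply_pos hx hy hyx) (neg_pos.2 (hE.2.2.2.1 y hy))

theorem IsNormalizable.nrm_neg (hE : IsNormalizable I E d) (hx : x ∈ I) (hy : y ∈ I)
    (hxy : x < y) : nrm E d x y < 0 :=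
  div_neg_of_neg_of_pos (hE.1.apply_neg hx hy hxy) (neg_pos.2 (hE.2.2.2.1 y hy))

theorem IsNormalizable.nrm_self (hE : IsNormalizable I E d) (hIo : IsOpen I) (hx : x ∈ I) :
    nrm E d x x = 0 := by
  rw [nrm, hE.apply_self hIo hx, zero_div]

end Normalizable

noncomputable def raySlope (E : ℝ → ℝ → ℝ) (d : ℝ → ℝ) (x t : ℝ) : ℝ :=
  nrm E d (x * t) t / t

/-- The function `h_E` of the paper. -/
noncomputable def raySlopeLim (E : ℝ → ℝ → ℝ) (d : ℝ → ℝ) (x : ℝ) : ℝ :=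
  limUnder (𝓝[>] 0) (raySlope E d x)

section RaySlope

variable {I : Set ℝ} {E : ℝ → ℝ → ℝ} {d : ℝ → ℝ} {x t C : ℝ}

theorem IsNormalizable.raySlope_pos (hE : IsNormalizable I E d) (hxt : x * t ∈ I) (ht : t ∈ I)
    (ht0 : 0 < t) (hx : 1 < x) : 0 < raySlope E d x t :=
  div_pos (hE.nrm_pos hxt ht (lt_mul_of_one_lt_left ht0 hx)) ht0

theorem IsNormalizable.raySlope_one (hE : IsNormalizable I E d) (hIo : IsOpen I) (ht : t ∈ I) :
    raySlope E d 1 t = 0 := by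
  rw [raySlope, one_mul, hE.nrm_self hIo ht, zero_div]

theorem IsNormalizable.raySlope_nonpos (hE : IsNormalizable I E d) (hIo : IsOpen I)
    (hxt : x * t ∈ I) (ht : t ∈ I) (ht0 : 0 < t) (hx : x ≤ 1) : raySlope E d x t ≤ 0 := by
  rcases hx.lt_or_eq with hx | rfl
  · exact div_nonpos_of_nonpos_of_nonneg
      (hE.nrm_neg hxt ht (mul_lt_of_lt_one_left ht0 hx)).le ht0.le
  · exact (hE.raySlope_one hIo ht).le

theorem concaveOn_raySlope_slice
    (hconc : ConcaveOn ℝ (I ×ˢ I) (fun p : ℝ × ℝ => nrm E d p.1 p.2)) (ht0 : 0 ≤ t) :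
    ConcaveOn ℝ {x | x * t ∈ I ∧ t ∈ I} (fun x => raySlope E d x t) := by
  simpa [raySlope, div_eq_inv_mul] using (hconc.comp_slice t).smul (inv_nonneg.2 ht0)

theorem antitoneOn_raySlope (hI : I ∈ 𝓝[>] (0 : ℝ))
    (hconc : ConcaveOn ℝ (I ×ˢ I) (fun p : ℝ × ℝ => nrm E d p.1 p.2))
    (hlim0 : Tendsto (fun t => nrm E d (x * t) t)
      ((𝓝[>] (0:ℝ)) ⊓ 𝓟 {t : ℝ | x * t ∈ I ∧ t ∈ I}) (𝓝 0)) (hx : 0 < x) :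
    ∃ b, 0 < b ∧ AntitoneOn (raySlope E d x) (Ioo 0 b) := by
  obtain ⟨b, hb, hsub⟩ :=
    mem_nhdsGT_iff_exists_Ioo_subset.1 (eventually_mul_mem_nhdsGT_zero hI hx)
  rw [nhdsGT_zero_inf_principal_mul_mem hI hx] at hlim0
  exact ⟨b, hb, ((hconc.comp_ray x).subset hsub (convex_Ioo 0 b)).antitoneOn_div_of_tendsto_zero
    hlim0⟩

theorem exists_tendsto_raySlope_of_eventually_le (hI : I ∈ 𝓝[>] (0 : ℝ))
    (hconc : ConcaveOn ℝ (I ×ˢ I) (fun p : ℝ × ℝ => nrm E d p.1 p.2))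
    (hlim0 : Tendsto (fun t => nrm E d (x * t) t)
      ((𝓝[>] (0:ℝ)) ⊓ 𝓟 {t : ℝ | x * t ∈ I ∧ t ∈ I}) (𝓝 0)) (hx : 0 < x)
    (hC : ∀ᶠ t in 𝓝[>] 0, raySlope E d x t ≤ C) :
    ∃ l, Tendsto (raySlope E d x) (𝓝[>] 0) (𝓝 l) ∧ ∀ᶠ t in 𝓝[>] 0, raySlope E d x t ≤ l := by
  obtain ⟨b, hb, hanti⟩ := antitoneOn_raySlope hI hconc hlim0 hx
  obtain ⟨l, hl, hle⟩ := hanti.exists_tendsto_nhdsGT hb hC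
  exact ⟨l, hl, eventually_of_mem (Ioo_mem_nhdsGT hb) hle⟩

theorem eventually_raySlope_nonpos (hI : I ∈ 𝓝[>] (0 : ℝ)) (hIo : IsOpen I)
    (hE : IsNormalizable I E d) (hx : 0 < x) (hx1 : x ≤ 1) :
    ∀ᶠ t in 𝓝[>] 0, raySlope E d x t ≤ 0 := by
  filter_upwards [eventually_mul_mem_nhdsGT_zero hI hx, self_mem_nhdsWithin]
    with t ⟨hxt, ht⟩ ht0
  exact hE.raySlope_nonpos hIo hxt ht ht0 hx1

theorem eventually_raySlope_pos (hI : I ∈ 𝓝[>] (0 : ℝ)) (hE : IsNormalizable I E d)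
    (hx : 1 < x) : ∀ᶠ t in 𝓝[>] 0, 0 < raySlope E d x t := by
  filter_upwards [eventually_mul_mem_nhdsGT_zero hI (one_pos.trans hx), self_mem_nhdsWithin]
    with t ⟨hxt, ht⟩ ht0
  exact hE.raySlope_pos hxt ht ht0 hx

theorem exists_tendsto_raySlope (hI : I ∈ 𝓝[>] (0 : ℝ)) (hIo : IsOpen I)
    (hE : IsNormalizable I E d)
    (hconc : ConcaveOn ℝ (I ×ˢ I) (fun p : ℝ × ℝ => nrm E d p.1 p.2))
    (hlim0 : ∀ x : ℝ, 0 < x → Tendsto (fun t => nrm E d (x * t) t)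
      ((𝓝[>] (0:ℝ)) ⊓ 𝓟 {t : ℝ | x * t ∈ I ∧ t ∈ I}) (𝓝 0)) (hx : 0 < x) :
    ∃ l, Tendsto (raySlope E d x) (𝓝[>] 0) (𝓝 l) ∧ ∀ᶠ t in 𝓝[>] 0, raySlope E d x t ≤ l := by
  suffices ∃ C, ∀ᶠ t in 𝓝[>] 0, raySlope E d x t ≤ C from
    let ⟨_, hC⟩ := this; exists_tendsto_raySlope_of_eventually_le hI hconc (hlim0 x hx) hx hC
  rcases le_or_gt x 1 with hx1 | hx1
  · exact ⟨0, eventually_raySlope_nonpos hI hIo hE hx hx1⟩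
  have hhalf : (0 : ℝ) < 1 / 2 := one_half_pos
  obtain ⟨l, hl, -⟩ := exists_tendsto_raySlope_of_eventually_le hI hconc (hlim0 _ hhalf) hhalf
    (eventually_raySlope_nonpos hI hIo hE hhalf one_half_lt_one.le)
  refine ⟨2 * (1 - l) * (x - 1), ?_⟩
  filter_upwards [eventually_mul_mem_nhdsGT_zero hI hx, eventually_mul_mem_nhdsGT_zero hI hhalf,
    self_mem_nhdsWithin, hl.eventually (lt_mem_nhds (sub_one_lt l))]
    with t ⟨hxt, ht⟩ hhalft (ht0 : 0 < t) hlt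
  have hslope := (concaveOn_raySlope_slice hconc ht0.le).slope_anti_adjacent hhalft ⟨hxt, ht⟩
    one_half_lt_one hx1
  rw [hE.raySlope_one hIo ht, div_le_iff₀ (sub_pos.2 hx1)] at hslope
  norm_num at hslope
  nlinarith [mul_pos (sub_pos.2 hx1) (sub_pos.2 hlt)]

theorem tendsto_raySlope (hI : I ∈ 𝓝[>] (0 : ℝ)) (hIo : IsOpen I)
    (hE : IsNormalizable I E d)
    (hconc : ConcaveOn ℝ (I ×ˢ I) (fun p : ℝ × ℝ => nrm E d p.1 p.2))
    (hlim0 : ∀ x : ℝ, 0 < x → Tendsto (fun t => nrm E d (x * t) t)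
      ((𝓝[>] (0:ℝ)) ⊓ 𝓟 {t : ℝ | x * t ∈ I ∧ t ∈ I}) (𝓝 0)) (hx : 0 < x) :
    Tendsto (raySlope E d x) (𝓝[>] 0) (𝓝 (raySlopeLim E d x)) :=
  let ⟨_, hl, _⟩ := exists_tendsto_raySlope hI hIo hE hconc hlim0 hx
  tendsto_nhds_limUnder ⟨_, hl⟩

theorem eventually_raySlope_le_raySlopeLim (hI : I ∈ 𝓝[>] (0 : ℝ)) (hIo : IsOpen I)
    (hE : IsNormalizable I E d)
    (hconc : ConcaveOn ℝ (I ×ˢ I) (fun p : ℝ × ℝ => nrm E d p.1 p.2))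
    (hlim0 : ∀ x : ℝ, 0 < x → Tendsto (fun t => nrm E d (x * t) t)
      ((𝓝[>] (0:ℝ)) ⊓ 𝓟 {t : ℝ | x * t ∈ I ∧ t ∈ I}) (𝓝 0)) (hx : 0 < x) :
    ∀ᶠ t in 𝓝[>] 0, raySlope E d x t ≤ raySlopeLim E d x := by
  obtain ⟨l, hl, hle⟩ := exists_tendsto_raySlope hI hIo hE hconc hlim0 hx
  rwa [raySlopeLim, hl.limUnder_eq]

theorem raySlopeLim_one (hI : I ∈ 𝓝[>] (0 : ℝ)) (hIo : IsOpen I) (hE : IsNormalizable I E d) :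
    raySlopeLim E d 1 = 0 := by
  refine Tendsto.limUnder_eq (tendsto_const_nhds.congr' ?_)
  filter_upwards [hI] with t ht
  exact (hE.raySlope_one hIo ht).symm

theorem raySlopeLim_pos (hI : I ∈ 𝓝[>] (0 : ℝ)) (hIo : IsOpen I)
    (hE : IsNormalizable I E d)
    (hconc : ConcaveOn ℝ (I ×ˢ I) (fun p : ℝ × ℝ => nrm E d p.1 p.2))
    (hlim0 : ∀ x : ℝ, 0 < x → Tendsto (fun t => nrm E d (x * t) t)
      ((𝓝[>] (0:ℝ)) ⊓ 𝓟 {t : ℝ | x * t ∈ I ∧ t ∈ I}) (𝓝 0)) (hx : 1 < x) :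
    0 < raySlopeLim E d x := by
  obtain ⟨t, hpos, hle⟩ := ((eventually_raySlope_pos hI hE hx).and
    (eventually_raySlope_le_raySlopeLim hI hIo hE hconc hlim0 (one_pos.trans hx))).exists
  exact hpos.trans_le hle

theorem concaveOn_raySlopeLim (hI : I ∈ 𝓝[>] (0 : ℝ)) (hIo : IsOpen I)
    (hE : IsNormalizable I E d)
    (hconc : ConcaveOn ℝ (I ×ˢ I) (fun p : ℝ × ℝ => nrm E d p.1 p.2))
    (hlim0 : ∀ x : ℝ, 0 < x → Tendsto (fun t => nrm E d (x * t) t)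
      ((𝓝[>] (0:ℝ)) ⊓ 𝓟 {t : ℝ | x * t ∈ I ∧ t ∈ I}) (𝓝 0)) :
    ConcaveOn ℝ (Ioi 0) (raySlopeLim E d) := by
  refine ConcaveOn.of_tendsto (l := 𝓝[>] (0 : ℝ)) (f := fun t x => raySlope E d x t)
    (convex_Ioi 0) (fun p hp q hq => ?_) fun x hx => tendsto_raySlope hI hIo hE hconc hlim0 hx
  filter_upwards [eventually_mul_mem_nhdsGT_zero hI hp, eventually_mul_mem_nhdsGT_zero hI hq,
    self_mem_nhdsWithin] with t hpt hqt (ht0 : 0 < t)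
  have hslice := concaveOn_raySlope_slice hconc ht0.le
  exact hslice.subset (hslice.1.segment_subset hpt hqt) (convex_segment p q)

end RaySlope

theorem statement11_general (I : Set ℝ) (hIoc : I.OrdConnected) (hIo : IsOpen I)
    (hglb : IsGLB I 0) (E : ℝ → ℝ → ℝ) (d : ℝ → ℝ)
    (hE : IsNormalizable I E d)
    (hconc : ConcaveOn ℝ (I ×ˢ I) (fun p : ℝ × ℝ => nrm E d p.1 p.2))
    (hlim0 : ∀ x : ℝ, 0 < x →
      Filter.Tendsto (fun t : ℝ => nrm E d (x * t) t)
        ((𝓝[>] (0:ℝ)) ⊓ Filter.principal {t : ℝ | x * t ∈ I ∧ t ∈ I}) (𝓝 0)) :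
    ∃ h : ℝ → ℝ,
      (∀ x : ℝ, 0 < x →
        Filter.Tendsto (fun t : ℝ => nrm E d (x * t) t / t)
          ((𝓝[>] (0:ℝ)) ⊓ Filter.principal {t : ℝ | x * t ∈ I ∧ t ∈ I}) (𝓝 (h x))) ∧
      (∀ x : ℝ, 0 < x → Real.sign (h x) = Real.sign (x - 1)) ∧
      ConcaveOn ℝ (Set.Ioi (0:ℝ)) h ∧
      MonotoneOn h (Set.Ioi (0:ℝ)) ∧
      StrictMonoOn h (Set.Ioo (0:ℝ) 1) := by
  have hI := mem_nhdsGT_zero_of_isGLB hIoc hIo hglb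
  have hconcave := concaveOn_raySlopeLim hI hIo hE hconc hlim0
  have hpos : ∀ x, 1 < x → 0 < raySlopeLim E d x := fun x hx =>
    raySlopeLim_pos hI hIo hE hconc hlim0 hx
  have hone := raySlopeLim_one hI hIo hE
  have hstrict : StrictMonoOn (raySlopeLim E d) (Ioi 0 ∩ Iic 1) :=
    hconcave.strictMonoOn_of_lt (mem_Ioi.2 two_pos) one_lt_two (hone ▸ hpos 2 one_lt_two)
  refine ⟨raySlopeLim E d, fun x hx => ?_, fun x hx => ?_, hconcave,
    hconcave.monotoneOn_of_eventually_ge (m := 0)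
      ((eventually_gt_atTop 1).mono fun x hx => (hpos x hx).le),
    hstrict.mono fun x hx => ⟨hx.1, hx.2.le⟩⟩
  · rw [nhdsGT_zero_inf_principal_mul_mem hI hx]
    exact tendsto_raySlope hI hIo hE hconc hlim0 hx
  · rcases lt_trichotomy x 1 with hx1 | rfl | hx1
    · have hneg : raySlopeLim E d x < 0 :=
        hone ▸ hstrict ⟨hx, hx1.le⟩ ⟨mem_Ioi.2 one_pos, mem_Iic.2 le_rfl⟩ hx1
      rw [Real.sign_of_neg hneg, Real.sign_of_neg (sub_neg.2 hx1)]
    · rw [hone, sub_self]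
    · rw [Real.sign_of_pos (hpos x hx1), Real.sign_of_pos (sub_pos.2 hx1)]

/-- Theorem (first part): if `E*` is concave and `E*(xt,t) → 0` as `t → 0⁺` for all
`x > 0`, then `h_E(x) = lim_{t→0⁺} E*(xt,t)/t` exists in `ℝ`, has the sign of `x - 1`,
and `h_E` is concave, nondecreasing on `(0,∞)` and strictly increasing on `(0,1)`. -/
theorem statement11 (I : Set ℝ) (hIoc : I.OrdConnected) (hIo : IsOpen I)
    (hne : I.Nonempty) (hglb : IsGLB I 0) (E : ℝ → ℝ → ℝ) (d : ℝ → ℝ)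
    (hE : IsNormalizable I E d)
    (hconc : ConcaveOn ℝ (I ×ˢ I) (fun p : ℝ × ℝ => nrm E d p.1 p.2))
    (hlim0 : ∀ x : ℝ, 0 < x →
      Filter.Tendsto (fun t : ℝ => nrm E d (x * t) t)
        ((𝓝[>] (0:ℝ)) ⊓ Filter.principal {t : ℝ | x * t ∈ I ∧ t ∈ I}) (𝓝 0)) :
    ∃ h : ℝ → ℝ,
      (∀ x : ℝ, 0 < x →
        Filter.Tendsto (fun t : ℝ => nrm E d (x * t) t / t)
          ((𝓝[>] (0:ℝ)) ⊓ Filter.principal {t : ℝ | x * t ∈ I ∧ t ∈ I}) (𝓝 (h x))) ∧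
      (∀ x : ℝ, 0 < x → Real.sign (h x) = Real.sign (x - 1)) ∧
      ConcaveOn ℝ (Set.Ioi (0:ℝ)) h ∧
      MonotoneOn h (Set.Ioi (0:ℝ)) ∧
      StrictMonoOn h (Set.Ioo (0:ℝ) 1) :=
  statement11_general I hIoc hIo hglb E d hE hconc hlim0
end

section
/- Let I, J, K be open intervals, let E, F, G be normalizable semideviations on I, J, K respectively, and let f : J × K → I be a differentiable function. Then the following are equivalent: (i) for every choice of M among the four means LLD_F, LD_F, UD_F, UUD_F and N among LLD_G, LD_G, UD_G, UUD_G, and for all n ∈ ℕ, x ∈ Jⁿ, y ∈ Kⁿ and weight vectors λ, LLD_E(f(x,y),λ) ≤ f(M(x,λ), N(y,λ)), where f(x,y) := (f(x₁,y₁),…,f(xₙ,yₙ)); (ii) there exist such a choice of M and N for which this inequality holds for all n, x, y, λ; (iii) for all p, u ∈ J and q, v ∈ K, E*(f(p,q), f(u,v)) ≤ ∂₁f(u,v)·F*(p,u) + ∂₂f(u,v)·G*(q,v). -/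
/-!
Each of the four means of `x` with weights `λ` is a zero, inside `I`, of
`e(y) = Σ λᵢ E(xᵢ, y)`, because `e` is positive left of the weighted points and negative right
of them. Given (iii), put `u, v` the means of `x, y`, apply (iii) to `(xᵢ, u, yᵢ, v)` and sum
with weights `λᵢ`: the right-hand side becomes a combination of the zeros `e_F(u)` and `e_G(v)`,
so `e_E(f(u, v)) ≤ 0`, which bounds `LLD_E` by `f(u, v)`; this gives (i).
Conversely, for two points `a, b` with weights `t, 1 - t` every mean `Φ(t)` tends to `b` as
`t → 0⁺` with right derivative `E*(a, b)`. Both sides of the inequality in (ii) along such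
pairs agree at `t = 0`, so their right derivatives at `0` compare, and the chain rule turns this
into (iii).
-/

open Set Filter Topology

/-- Selector among the four semideviation means: `0 ↦ LLD`, `1 ↦ LD`, `2 ↦ UD`,
`3 ↦ UUD`. -/
noncomputable def meanOf (k : Fin 4) (I : Set ℝ) (E : ℝ → ℝ → ℝ) {n : ℕ}
    (x lam : Fin n → ℝ) : ℝ :=
  if k = 0 then LLD I E x lam
  else if k = 1 then LD I E x lam
  else if k = 2 then UD I E x lam
  else UUD I E x lam

namespace IsSemideviation

variable {I : Set ℝ} {E : ℝ → ℝ → ℝ}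

theorem pos_of_lt (hE : IsSemideviation I E) {x y : ℝ} (hx : x ∈ I) (hy : y ∈ I)
    (h : y < x) : 0 < E x y := by
  have hs := hE x hx y hy h.ne'
  rw [Real.sign_of_pos (sub_pos.2 h), Real.sign] at hs
  split_ifs at hs with h₁ h₂ <;> norm_num at hs
  exact h₂

theorem neg_of_lt_s13 (hE : IsSemideviation I E) {x y : ℝ} (hx : x ∈ I) (hy : y ∈ I)
    (h : x < y) : E x y < 0 := by
  have hs := hE x hx y hy h.ne
  rw [Real.sign_of_neg (sub_neg.2 h), Real.sign] at hs
  split_ifs at hs with h₁ <;> norm_num at hs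
  exact h₁

theorem eq_of_eq_zero (hE : IsSemideviation I E) {x y : ℝ} (hx : x ∈ I) (hy : y ∈ I)
    (h : E x y = 0) : x = y := by
  by_contra hne
  have hs := hE x hx y hy hne
  rw [h, Real.sign_zero, eq_comm, Real.sign_eq_zero_iff, sub_eq_zero] at hs
  exact hne hs

theorem apply_self (hE : IsSemideviation I E) (hIo : IsOpen I) {x : ℝ} (hx : x ∈ I)
    (hc : ContinuousOn (E x) I) : E x x = 0 := by
  have hI : I ∈ 𝓝 x := hIo.mem_nhds hx
  have hct := (hc.continuousAt hI).tendsto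
  refine le_antisymm (le_of_tendsto (hct.mono_left (nhdsWithin_le_nhds (s := Ioi x))) ?_)
    (ge_of_tendsto (hct.mono_left (nhdsWithin_le_nhds (s := Iio x))) ?_)
  · filter_upwards [inter_mem_nhdsWithin (Ioi x) hI] with y ⟨hxy, hy⟩
    exact (hE.neg_of_lt_s13 hx hy hxy).le
  · filter_upwards [inter_mem_nhdsWithin (Iio x) hI] with y ⟨hyx, hy⟩
    exact (hE.pos_of_lt hx hy hyx).le

end IsSemideviation

section WeightedSum

variable {I : Set ℝ} {E : ℝ → ℝ → ℝ} {n : ℕ} {x lam : Fin n → ℝ}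

theorem IsWeight.exists_ne_zero (hw : IsWeight lam) : ∃ i, lam i ≠ 0 := by
  by_contra! h
  have := hw.2
  simp [h] at this

theorem IsWeight.exists_extreme_support (hw : IsWeight lam) (x : Fin n → ℝ) :
    ∃ i j, ∀ k, lam k ≠ 0 → x i ≤ x k ∧ x k ≤ x j := by
  obtain ⟨k₀, hk₀⟩ := hw.exists_ne_zero
  have hT : (Finset.univ.filter fun k => lam k ≠ 0).Nonempty := ⟨k₀, by simpa using hk₀⟩
  obtain ⟨i, -, hmin⟩ := Finset.exists_min_image _ x hT
  obtain ⟨j, -, hmax⟩ := Finset.exists_max_image _ x hT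
  simp only [Finset.mem_filter, Finset.mem_univ, true_and] at hmin hmax
  exact ⟨i, j, fun k hk => ⟨hmin k hk, hmax k hk⟩⟩

theorem eFun_continuousOn (hc : ∀ x ∈ I, ContinuousOn (E x) I) (hx : ∀ i, x i ∈ I)
    (lam : Fin n → ℝ) : ContinuousOn (eFun E x lam) I :=
  continuousOn_finsetSum _ fun i _ => continuousOn_const.mul (hc (x i) (hx i))

theorem eFun_pos (hE : IsSemideviation I E) (hx : ∀ i, x i ∈ I) (hw : IsWeight lam)
    {y : ℝ} (hy : y ∈ I) (h : ∀ i, lam i ≠ 0 → y < x i) : 0 < eFun E x lam y := by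
  have hterm : ∀ i, lam i ≠ 0 → 0 < lam i * E (x i) y := fun i hi =>
    mul_pos ((hw.1 i).lt_of_ne' hi) (hE.pos_of_lt (hx i) hy (h i hi))
  obtain ⟨j, hj⟩ := hw.exists_ne_zero
  refine Finset.sum_pos' (fun i _ => ?_) ⟨j, Finset.mem_univ j, hterm j hj⟩
  by_cases hi : lam i = 0
  · simp [hi]
  · exact (hterm i hi).le

theorem eFun_neg (hE : IsSemideviation I E) (hx : ∀ i, x i ∈ I) (hw : IsWeight lam)
    {y : ℝ} (hy : y ∈ I) (h : ∀ i, lam i ≠ 0 → x i < y) : eFun E x lam y < 0 := by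
  have hterm : ∀ i, lam i ≠ 0 → lam i * E (x i) y < 0 := fun i hi =>
    mul_neg_of_pos_of_neg ((hw.1 i).lt_of_ne' hi) (hE.neg_of_lt_s13 (hx i) hy (h i hi))
  obtain ⟨j, hj⟩ := hw.exists_ne_zero
  refine Finset.sum_neg' (fun i _ => ?_) ⟨j, Finset.mem_univ j, hterm j hj⟩
  by_cases hi : lam i = 0
  · simp [hi]
  · exact (hterm i hi).le

theorem le_of_eFun_eq_zero (hE : IsSemideviation I E) (hx : ∀ i, x i ∈ I) (hw : IsWeight lam)
    {y c : ℝ} (hy : y ∈ I) (h₀ : eFun E x lam y = 0) (hc : ∀ i, lam i ≠ 0 → x i ≤ c) :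
    y ≤ c :=
  not_lt.1 fun hcy => (eFun_neg hE hx hw hy fun i hi => (hc i hi).trans_lt hcy).ne h₀

theorem ge_of_eFun_eq_zero (hE : IsSemideviation I E) (hx : ∀ i, x i ∈ I) (hw : IsWeight lam)
    {y c : ℝ} (hy : y ∈ I) (h₀ : eFun E x lam y = 0) (hc : ∀ i, lam i ≠ 0 → c ≤ x i) :
    c ≤ y :=
  not_lt.1 fun hyc => (eFun_pos hE hx hw hy fun i hi => hyc.trans_le (hc i hi)).ne' h₀

theorem LLD_le_of_eFun_nonpos (hE : IsSemideviation I E) (hx : ∀ i, x i ∈ I)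
    (hw : IsWeight lam) {c : ℝ} (hc : c ∈ I) (h : eFun E x lam c ≤ 0) : LLD I E x lam ≤ c := by
  obtain ⟨i, _, hi⟩ := hw.exists_extreme_support x
  refine csInf_le ⟨x i, fun y ⟨hy, hey⟩ => not_lt.1 fun hyx => ?_⟩ ⟨hc, h⟩
  exact (eFun_pos hE hx hw hy fun k hk => hyx.trans_le (hi k hk).1).not_ge hey

theorem eFun_div_eq_sum_nrm (d : ℝ → ℝ) (y : ℝ) :
    eFun E x lam y / -d y = ∑ i, lam i * nrm E d (x i) y := by
  simp only [eFun, nrm, Finset.sum_div, mul_div_assoc]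

end WeightedSum

section SignChange

variable {α : Type*} [ConditionallyCompleteLinearOrder α] [TopologicalSpace α] [OrderTopology α]
  [DenselyOrdered α] {I S : Set α} {e : α → ℝ} {a b : α}

theorem IsOpen.exists_mem_Ioo (hI : IsOpen I) {c : α} (ha : a ∈ I) (hac : a < c) :
    ∃ y ∈ I, a < y ∧ y < c := by
  obtain ⟨l, hal, hl⟩ := exists_Ico_subset_of_mem_nhds (hI.mem_nhds ha) ⟨c, hac⟩
  obtain ⟨y, hay, hy⟩ := exists_between (lt_min hal hac)
  exact ⟨y, hl ⟨hay.le, hy.trans_le (min_le_left _ _)⟩, hay, hy.trans_le (min_le_right _ _)⟩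

variable [NoMinOrder α] [NoMaxOrder α]

theorem csInf_mem_and_eq_zero_of_sign_change (hI : I.OrdConnected) (hIo : IsOpen I)
    (he : ContinuousOn e I) (ha : a ∈ I) (hb : b ∈ I)
    (hpos : ∀ y ∈ I, y < a → 0 < e y) (hneg : ∀ y ∈ I, b < y → e y < 0)
    (hS_of_neg : ∀ y ∈ I, e y < 0 → y ∈ S) (hS_nonpos : ∀ y ∈ S, y ∈ I ∧ e y ≤ 0) :
    sInf S ∈ I ∧ e (sInf S) = 0 := by
  have hlower : a ∈ lowerBounds S := fun y hy =>
    not_lt.1 fun hya => (hpos y (hS_nonpos y hy).1 hya).not_ge (hS_nonpos y hy).2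
  have hbdd : BddBelow S := ⟨a, hlower⟩
  obtain ⟨c, hbc⟩ := exists_gt b
  obtain ⟨y, hyI, hby, -⟩ := hIo.exists_mem_Ioo hb hbc
  have hne : S.Nonempty := ⟨y, hS_of_neg y hyI (hneg y hyI hby)⟩
  have hle_b : sInf S ≤ b := by
    by_contra! hb_lt
    obtain ⟨y, hyI, hby, hyS⟩ := hIo.exists_mem_Ioo hb hb_lt
    exact (csInf_le hbdd (hS_of_neg y hyI (hneg y hyI hby))).not_gt hyS
  have hmem : sInf S ∈ I := hI.out ha hb ⟨le_csInf hne hlower, hle_b⟩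
  have hcont : ContinuousAt e (sInf S) := he.continuousAt (hIo.mem_nhds hmem)
  have hnonpos : e (sInf S) ≤ 0 := by
    simpa using hcont.continuousWithinAt.mem_closure (csInf_mem_closure hne hbdd)
      (t := Iic 0) fun y hy => (hS_nonpos y hy).2
  have hnonneg : 0 ≤ e (sInf S) := by
    refine ge_of_tendsto (hcont.tendsto.mono_left (nhdsWithin_le_nhds (s := Iio (sInf S)))) ?_
    filter_upwards [inter_mem_nhdsWithin (Iio (sInf S)) (hIo.mem_nhds hmem)] with y ⟨hy, hyI⟩
    exact not_lt.1 fun hey => notMem_of_lt_csInf hy hbdd (hS_of_neg y hyI hey)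
  exact ⟨hmem, hnonpos.antisymm hnonneg⟩

theorem csSup_mem_and_eq_zero_of_sign_change (hI : I.OrdConnected) (hIo : IsOpen I)
    (he : ContinuousOn e I) (ha : a ∈ I) (hb : b ∈ I)
    (hpos : ∀ y ∈ I, y < a → 0 < e y) (hneg : ∀ y ∈ I, b < y → e y < 0)
    (hS_of_pos : ∀ y ∈ I, 0 < e y → y ∈ S) (hS_nonneg : ∀ y ∈ S, y ∈ I ∧ 0 ≤ e y) :
    sSup S ∈ I ∧ e (sSup S) = 0 := by
  have := csInf_mem_and_eq_zero_of_sign_change (α := αᵒᵈ) (S := OrderDual.ofDual ⁻¹' S)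
    (e := fun y => -e (OrderDual.ofDual y)) hI.dual hIo (by exact he.neg) hb ha
    (fun y hy hyb => neg_pos.2 (hneg y hy hyb)) (fun y hy hay => neg_neg_iff_pos.2 (hpos y hy hay))
    (fun y hy hey => hS_of_pos y hy (neg_neg_iff_pos.1 hey))
    (fun y hy => ⟨(hS_nonneg y hy).1, neg_nonpos.2 (hS_nonneg y hy).2⟩)
  exact ⟨this.1, neg_eq_zero.1 this.2⟩

end SignChange

theorem meanOf_mem_and_eFun_eq_zero {I : Set ℝ} {E : ℝ → ℝ → ℝ} (hI : I.OrdConnected)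
    (hIo : IsOpen I) (hE : IsSemideviation I E) (hc : ∀ x ∈ I, ContinuousOn (E x) I)
    {n : ℕ} {x lam : Fin n → ℝ} (hx : ∀ i, x i ∈ I) (hw : IsWeight lam) (k : Fin 4) :
    meanOf k I E x lam ∈ I ∧ eFun E x lam (meanOf k I E x lam) = 0 := by
  obtain ⟨i, j, hij⟩ := hw.exists_extreme_support x
  have he := eFun_continuousOn hc hx lam
  have hpos : ∀ y ∈ I, y < x i → 0 < eFun E x lam y := fun y hy hyx =>
    eFun_pos hE hx hw hy fun k hk => hyx.trans_le (hij k hk).1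
  have hneg : ∀ y ∈ I, x j < y → eFun E x lam y < 0 := fun y hy hxy =>
    eFun_neg hE hx hw hy fun k hk => (hij k hk).2.trans_lt hxy
  fin_cases k
  · exact csInf_mem_and_eq_zero_of_sign_change hI hIo he (hx i) (hx j) hpos hneg
      (fun y hy h => ⟨hy, h.le⟩) fun y hy => hy
  · exact csInf_mem_and_eq_zero_of_sign_change hI hIo he (hx i) (hx j) hpos hneg
      (fun y hy h => ⟨hy, h⟩) fun y hy => ⟨hy.1, hy.2.le⟩
  · exact csSup_mem_and_eq_zero_of_sign_change hI hIo he (hx i) (hx j) hpos hneg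
      (fun y hy h => ⟨hy, h⟩) fun y hy => ⟨hy.1, hy.2.le⟩
  · exact csSup_mem_and_eq_zero_of_sign_change hI hIo he (hx i) (hx j) hpos hneg
      (fun y hy h => ⟨hy, h.le⟩) fun y hy => hy

theorem LLD_map_le_of_nrm_le {I J K : Set ℝ} {E F G : ℝ → ℝ → ℝ} {dE dF dG : ℝ → ℝ}
    (hE : IsNormalizable I E dE) (hJ : J.OrdConnected) (hJo : IsOpen J)
    (hF : IsNormalizable J F dF) (hK : K.OrdConnected) (hKo : IsOpen K)
    (hG : IsNormalizable K G dG) {f f₁ f₂ : ℝ → ℝ → ℝ} (hmap : ∀ u ∈ J, ∀ v ∈ K, f u v ∈ I)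
    (hnrm : ∀ p ∈ J, ∀ u ∈ J, ∀ q ∈ K, ∀ v ∈ K,
      nrm E dE (f p q) (f u v) ≤ f₁ u v * nrm F dF p u + f₂ u v * nrm G dG q v)
    (k l : Fin 4) :
    ∀ (n : ℕ) (x y lam : Fin n → ℝ), (∀ i, x i ∈ J) → (∀ i, y i ∈ K) → IsWeight lam →
      LLD I E (fun i => f (x i) (y i)) lam ≤ f (meanOf k J F x lam) (meanOf l K G y lam) := by
  intro n x y lam hx hy hw
  obtain ⟨hu, hFu⟩ := meanOf_mem_and_eFun_eq_zero hJ hJo hF.1 hF.2.1 hx hw k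
  obtain ⟨hv, hGv⟩ := meanOf_mem_and_eFun_eq_zero hK hKo hG.1 hG.2.1 hy hw l
  set u := meanOf k J F x lam
  set v := meanOf l K G y lam
  have hfuv := hmap u hu v hv
  have hsum : eFun E (fun i => f (x i) (y i)) lam (f u v) / -dE (f u v)
      ≤ f₁ u v * (eFun F x lam u / -dF u) + f₂ u v * (eFun G y lam v / -dG v) := by
    rw [eFun_div_eq_sum_nrm, eFun_div_eq_sum_nrm, eFun_div_eq_sum_nrm, Finset.mul_sum,
      Finset.mul_sum, ← Finset.sum_add_distrib]
    refine Finset.sum_le_sum fun i _ => ?_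
    rw [mul_left_comm, mul_left_comm (f₂ u v), ← mul_add]
    exact mul_le_mul_of_nonneg_left (hnrm _ (hx i) u hu _ (hy i) v hv) (hw.1 i)
  simp only [hFu, hGv, zero_div, mul_zero, add_zero] at hsum
  rw [div_le_iff₀ (neg_pos.2 (hE.2.2.2.1 _ hfuv)), zero_mul] at hsum
  exact LLD_le_of_eFun_nonpos hE.1 (fun i => hmap _ (hx i) _ (hy i)) hw hfuv hsum

theorem isWeight_pair {t : ℝ} (ht : t ∈ Icc (0 : ℝ) 1) : IsWeight ![t, 1 - t] :=
  ⟨fun i => by fin_cases i <;> simp [ht.1, ht.2], by simp⟩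

noncomputable def pairMean (k : Fin 4) (I : Set ℝ) (E : ℝ → ℝ → ℝ) (a b t : ℝ) : ℝ :=
  meanOf k I E ![a, b] ![t, 1 - t]

section PairMean

variable {I : Set ℝ} {E : ℝ → ℝ → ℝ} {a b : ℝ}

theorem pairMean_spec (hI : I.OrdConnected) (hIo : IsOpen I) (hE : IsSemideviation I E)
    (hc : ∀ x ∈ I, ContinuousOn (E x) I) (ha : a ∈ I) (hb : b ∈ I) (k : Fin 4) {t : ℝ}
    (ht : t ∈ Icc (0 : ℝ) 1) :
    pairMean k I E a b t ∈ I ∧ pairMean k I E a b t ∈ uIcc a b ∧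
      t * E a (pairMean k I E a b t) + (1 - t) * E b (pairMean k I E a b t) = 0 := by
  have hx : ∀ i, ![a, b] i ∈ I := fun i => by fin_cases i <;> simpa
  obtain ⟨hmem, hzero⟩ := meanOf_mem_and_eFun_eq_zero hI hIo hE hc hx (isWeight_pair ht) k
  refine ⟨hmem, ⟨ge_of_eFun_eq_zero hE hx (isWeight_pair ht) hmem hzero fun i _ => ?_,
    le_of_eFun_eq_zero hE hx (isWeight_pair ht) hmem hzero fun i _ => ?_⟩, ?_⟩
  · fin_cases i <;> simp
  · fin_cases i <;> simp
  · simpa [eFun, Fin.sum_univ_two, pairMean] using hzero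

theorem pairMean_zero (hI : I.OrdConnected) (hIo : IsOpen I) (hE : IsSemideviation I E)
    (hc : ∀ x ∈ I, ContinuousOn (E x) I) (ha : a ∈ I) (hb : b ∈ I) (k : Fin 4) :
    pairMean k I E a b 0 = b := by
  obtain ⟨hmem, -, hzero⟩ := pairMean_spec hI hIo hE hc ha hb k (left_mem_Icc.2 zero_le_one)
  simp only [zero_mul, sub_zero, one_mul, zero_add] at hzero
  exact (hE.eq_of_eq_zero hb hmem hzero).symm

/-- Any cluster point `z` of the path satisfies `E b z = 0` (let `t → 0` in the defining
equation), and `b` is the only such point. -/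
theorem tendsto_pairMean (hI : I.OrdConnected) (hIo : IsOpen I) (hE : IsSemideviation I E)
    (hc : ∀ x ∈ I, ContinuousOn (E x) I) (ha : a ∈ I) (hb : b ∈ I) (k : Fin 4) :
    Tendsto (pairMean k I E a b) (𝓝[>] 0) (𝓝 b) := by
  set Φ := pairMean k I E a b
  have hspec : ∀ᶠ t in 𝓝[>] (0 : ℝ), Φ t ∈ uIcc a b ∧
      t * E a (Φ t) + (1 - t) * E b (Φ t) = 0 := by
    filter_upwards [Ioo_mem_nhdsGT zero_lt_one] with t ht
    exact (pairMean_spec hI hIo hE hc ha hb k (Ioo_subset_Icc_self ht)).2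
  refine isCompact_uIcc.tendsto_nhds_of_unique_mapClusterPt (hspec.mono fun t h => h.1) ?_
  intro z hz hcluster
  obtain ⟨U, hU, hUz⟩ := mapClusterPt_iff_ultrafilter.1 hcluster
  have hzI : z ∈ I := hI.uIcc_subset ha hb hz
  have hid : Tendsto id (U : Filter ℝ) (𝓝 0) := tendsto_id.mono_left (hU.trans nhdsWithin_le_nhds)
  have hEa := ((hc a ha).continuousAt (hIo.mem_nhds hzI)).tendsto.comp hUz
  have hEb := ((hc b hb).continuousAt (hIo.mem_nhds hzI)).tendsto.comp hUz
  have hcomb : Tendsto (fun t => t * E a (Φ t) + (1 - t) * E b (Φ t)) U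
      (𝓝 (0 * E a z + (1 - 0) * E b z)) :=
    (hid.mul hEa).add ((tendsto_const_nhds.sub hid).mul hEb)
  have hEbz : E b z = 0 := by
    simpa using tendsto_nhds_unique hcomb
      (tendsto_const_nhds.congr' (Eventually.filter_mono hU (hspec.mono fun t h => h.2.symm)))
  exact (hE.eq_of_eq_zero hb hzI hEbz).symm

end PairMean

/-- Dividing `t E(a, Φ) + (1 - t) E(b, Φ) = 0` by `t (Φ - b)` writes `(Φ - b) / t` as
`-E(a, Φ) / ((1 - t) · slope E(b, ·) b Φ)`, which tends to `E(a, b) / -∂₂E(b, b)`. -/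
theorem hasDerivWithinAt_pairMean {I : Set ℝ} {E : ℝ → ℝ → ℝ} {dE : ℝ → ℝ}
    (hI : I.OrdConnected) (hIo : IsOpen I) (hE : IsNormalizable I E dE) {a b : ℝ} (ha : a ∈ I)
    (hb : b ∈ I) (k : Fin 4) :
    HasDerivWithinAt (pairMean k I E a b) (nrm E dE a b) (Ioi 0) 0 := by
  obtain ⟨hsd, hc, hderiv, hneg, -⟩ := hE
  set Φ := pairMean k I E a b
  have hspec : ∀ᶠ t in 𝓝[>] (0 : ℝ), t ∈ Ioo 0 1 ∧ Φ t ∈ I ∧ Φ t ∈ uIcc a b ∧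
      t * E a (Φ t) + (1 - t) * E b (Φ t) = 0 := by
    filter_upwards [Ioo_mem_nhdsGT zero_lt_one] with t ht
    exact ⟨ht, pairMean_spec hI hIo hsd hc ha hb k (Ioo_subset_Icc_self ht)⟩
  have hEbb : E b b = 0 := hsd.apply_self hIo hb (hc b hb)
  have hΦ0 : Φ 0 = b := pairMean_zero hI hIo hsd hc ha hb k
  rw [hasDerivWithinAt_iff_tendsto_slope' self_notMem_Ioi]
  rcases eq_or_ne a b with rfl | hab
  · have hnrm : nrm E dE a a = 0 := by rw [nrm, hEbb, zero_div]
    rw [hnrm]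
    refine tendsto_const_nhds.congr' (hspec.mono fun t h => ?_)
    have hΦ : Φ t = a := by simpa using h.2.2.1
    rw [slope_def_field, hΦ, hΦ0, sub_self, zero_div]
  have hΦne : ∀ᶠ t in 𝓝[>] (0 : ℝ), Φ t ≠ b := hspec.mono fun t ⟨ht, _, _, h⟩ hΦb => by
    rw [hΦb, hEbb, mul_zero, add_zero, mul_eq_zero] at h
    exact h.elim ht.1.ne' fun h => hab (hsd.eq_of_eq_zero ha hb h)
  have hΦ := tendsto_pairMean hI hIo hsd hc ha hb k
  have hslope : Tendsto (fun t => slope (E b) b (Φ t)) (𝓝[>] 0) (𝓝 (dE b)) :=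
    (hasDerivAt_iff_tendsto_slope.1 ((hderiv b hb).hasDerivAt (hIo.mem_nhds hb))).comp
      (tendsto_nhdsWithin_iff.2 ⟨hΦ, hΦne⟩)
  have hEa : Tendsto (fun t => E a (Φ t)) (𝓝[>] 0) (𝓝 (E a b)) :=
    ((hc a ha).continuousAt (hIo.mem_nhds hb)).tendsto.comp hΦ
  have h1t : Tendsto (fun t : ℝ => 1 - t) (𝓝[>] 0) (𝓝 (1 - 0)) :=
    (tendsto_const_nhds.sub tendsto_id).mono_left nhdsWithin_le_nhds
  have hlim := hEa.neg.div (h1t.mul hslope) (by simpa using (hneg b hb).ne)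
  rw [show -E a b / ((1 - 0) * dE b) = nrm E dE a b by rw [nrm]; ring] at hlim
  refine hlim.congr' ((hspec.and hΦne).mono fun t ⟨⟨ht, hΦI, _, h⟩, hΦb⟩ => ?_)
  have hEbΦ : E b (Φ t) ≠ 0 := fun h0 => hΦb (hsd.eq_of_eq_zero hb hΦI h0).symm
  have hsub : Φ t - b ≠ 0 := sub_ne_zero.2 hΦb
  have ht0 : t ≠ 0 := ht.1.ne'
  have h1 : 1 - t ≠ 0 := (sub_pos.2 ht.2).ne'
  simp only [Pi.div_apply, slope_def_field, hΦ0, hEbb, sub_zero]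
  field_simp
  linear_combination -h

theorem HasDerivWithinAt.le_of_eventually_le {g h : ℝ → ℝ} {g' h' x : ℝ}
    (hg : HasDerivWithinAt g g' (Ioi x) x) (hh : HasDerivWithinAt h h' (Ioi x) x)
    (hx : g x = h x) (hle : ∀ᶠ t in 𝓝[>] x, g t ≤ h t) : g' ≤ h' := by
  rw [hasDerivWithinAt_iff_tendsto_slope' self_notMem_Ioi] at hg hh
  refine le_of_tendsto_of_tendsto hg hh ?_
  filter_upwards [hle, self_mem_nhdsWithin] with t ht hxt
  rw [slope_def_field, slope_def_field, hx]
  exact div_le_div_of_nonneg_right (sub_le_sub_right ht _) (sub_pos.2 hxt).le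

theorem nrm_le_of_LLD_map_le {I J K : Set ℝ} {E F G : ℝ → ℝ → ℝ} {dE dF dG : ℝ → ℝ}
    (hI : I.OrdConnected) (hIo : IsOpen I) (hE : IsNormalizable I E dE)
    (hJ : J.OrdConnected) (hJo : IsOpen J) (hF : IsNormalizable J F dF)
    (hK : K.OrdConnected) (hKo : IsOpen K) (hG : IsNormalizable K G dG)
    {f f₁ f₂ : ℝ → ℝ → ℝ} (hmap : ∀ u ∈ J, ∀ v ∈ K, f u v ∈ I)
    (hdf : ∀ u ∈ J, ∀ v ∈ K, HasFDerivAt (fun p : ℝ × ℝ => f p.1 p.2)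
      ((f₁ u v) • ContinuousLinearMap.fst ℝ ℝ ℝ + (f₂ u v) • ContinuousLinearMap.snd ℝ ℝ ℝ) (u, v))
    (k l : Fin 4)
    (hineq : ∀ (n : ℕ) (x y lam : Fin n → ℝ), (∀ i, x i ∈ J) → (∀ i, y i ∈ K) → IsWeight lam →
      LLD I E (fun i => f (x i) (y i)) lam ≤ f (meanOf k J F x lam) (meanOf l K G y lam)) :
    ∀ p ∈ J, ∀ u ∈ J, ∀ q ∈ K, ∀ v ∈ K,
      nrm E dE (f p q) (f u v) ≤ f₁ u v * nrm F dF p u + f₂ u v * nrm G dG q v := by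
  intro p hp u hu q hq v hv
  have hF0 := pairMean_zero hJ hJo hF.1 hF.2.1 hp hu k
  have hG0 := pairMean_zero hK hKo hG.1 hG.2.1 hq hv l
  have hrhs : HasDerivWithinAt (fun t => f (pairMean k J F p u t) (pairMean l K G q v t))
      (f₁ u v * nrm F dF p u + f₂ u v * nrm G dG q v) (Ioi 0) 0 := by
    refine ((hdf u hu v hv).comp_hasDerivWithinAt_of_eq (x := 0)
      ((hasDerivWithinAt_pairMean hJ hJo hF hp hu k).prodMk
        (hasDerivWithinAt_pairMean hK hKo hG hq hv l)) (by rw [hF0, hG0])).congr_deriv ?_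
    simp
  have hlhs := hasDerivWithinAt_pairMean hI hIo hE (hmap p hp q hq) (hmap u hu v hv) 0
  have hE0 := pairMean_zero hI hIo hE.1 hE.2.1 (hmap p hp q hq) (hmap u hu v hv) 0
  refine hlhs.le_of_eventually_le hrhs (by rw [hE0, hF0, hG0]) ?_
  filter_upwards [Ioo_mem_nhdsGT zero_lt_one] with t ht
  have := hineq 2 ![p, u] ![q, v] ![t, 1 - t] (fun i => by fin_cases i <;> simpa)
    (fun i => by fin_cases i <;> simpa) (isWeight_pair (Ioo_subset_Icc_self ht))
  rw [show (fun i => f (![p, u] i) (![q, v] i)) = ![f p q, f u v] by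
    ext i; fin_cases i <;> rfl] at this
  exact this
/-- Theorem: characterization of Hölder–Minkowski type inequalities for semideviation
means under a differentiable operation `f : J × K → I` with partial derivatives
`f₁, f₂`. -/
theorem statement13 (I J K : Set ℝ)
    (hI : I.OrdConnected) (hIo : IsOpen I)
    (hJ : J.OrdConnected) (hJo : IsOpen J)
    (hK : K.OrdConnected) (hKo : IsOpen K)
    (E F G : ℝ → ℝ → ℝ) (dE dF dG : ℝ → ℝ)
    (hE : IsNormalizable I E dE) (hF : IsNormalizable J F dF)
    (hG : IsNormalizable K G dG)
    (f f₁ f₂ : ℝ → ℝ → ℝ)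
    (hmap : ∀ u ∈ J, ∀ v ∈ K, f u v ∈ I)
    (hdf : ∀ u ∈ J, ∀ v ∈ K, HasFDerivAt (fun p : ℝ × ℝ => f p.1 p.2)
      ((f₁ u v) • ContinuousLinearMap.fst ℝ ℝ ℝ
        + (f₂ u v) • ContinuousLinearMap.snd ℝ ℝ ℝ) (u, v)) :
    ((∀ k l : Fin 4, ∀ (n : ℕ) (x y lam : Fin n → ℝ),
        (∀ i, x i ∈ J) → (∀ i, y i ∈ K) → IsWeight lam →
        LLD I E (fun i => f (x i) (y i)) lam
          ≤ f (meanOf k J F x lam) (meanOf l K G y lam)) ↔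
     (∃ k l : Fin 4, ∀ (n : ℕ) (x y lam : Fin n → ℝ),
        (∀ i, x i ∈ J) → (∀ i, y i ∈ K) → IsWeight lam →
        LLD I E (fun i => f (x i) (y i)) lam
          ≤ f (meanOf k J F x lam) (meanOf l K G y lam))) ∧
    ((∃ k l : Fin 4, ∀ (n : ℕ) (x y lam : Fin n → ℝ),
        (∀ i, x i ∈ J) → (∀ i, y i ∈ K) → IsWeight lam →
        LLD I E (fun i => f (x i) (y i)) lam
          ≤ f (meanOf k J F x lam) (meanOf l K G y lam)) ↔
     (∀ p ∈ J, ∀ u ∈ J, ∀ q ∈ K, ∀ v ∈ K,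
        nrm E dE (f p q) (f u v)
          ≤ f₁ u v * nrm F dF p u + f₂ u v * nrm G dG q v)) := by
  have forward := LLD_map_le_of_nrm_le (f₁ := f₁) (f₂ := f₂) hE hJ hJo hF hK hKo hG hmap
  have backward := nrm_le_of_LLD_map_le hI hIo hE hJ hJo hF hK hKo hG hmap hdf
  exact ⟨⟨fun h => ⟨0, 0, h 0 0⟩, fun ⟨k, l, h⟩ => forward (backward k l h)⟩,
    ⟨fun ⟨k, l, h⟩ => backward k l h, fun h => ⟨0, 0, forward h 0 0⟩⟩⟩
end
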